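/- arXiv:1707.07505 — 3 statements merged into one kernel-verified Lean document; each statement's English description precedes it below -/
import Mathlib

section
/- Let R be a Prüfer domain and let I be a proper ideal of R whose radical is a prime ideal P. If L is an ideal of R with radical P such that LR_P ⊊ IR_P (strict containment of R_P-submodules of the quotient field K), then L ⊆ I. -/
open Pointwise

section Defs

variable {R : Type*} (K : Type*) [CommRing R] [IsDomain R] [Field K] [Algebra R K]
  [IsFractionRing R K]

/-- A function `f` on the `R`-submodules of the quotient field `K` is a semistar operation if it
is extensive, idempotent, monotone and commutes with scaling by elements of `K`. -/
def IsSemistarOperation (f : Submodule R K → Submodule R K) : Prop :=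
  (∀ I : Submodule R K, I ≤ f I) ∧
  (∀ I : Submodule R K, f (f I) = f I) ∧
  (∀ I J : Submodule R K, I ≤ J → f I ≤ f J) ∧
  (∀ (x : K) (I : Submodule R K), f (x • I) = x • f I)

/-- A semistar operation is stable if it distributes over finite intersections. -/
def IsStableOperation (f : Submodule R K → Submodule R K) : Prop :=
  ∀ I J : Submodule R K, f (I ⊓ J) = f I ⊓ f J

/-- An ideal of `R`, viewed as an `R`-submodule of the quotient field `K`. -/
def idealToK (I : Ideal R) : Submodule R K :=
  Submodule.map (Algebra.linearMap R K) I

/-- A Prüfer domain is an integral domain in which every nonzero finitely generated ideal is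
invertible (as a fractional ideal, i.e. as a submodule of the quotient field). -/
def IsPruferDomain : Prop :=
  ∀ I : Ideal R, I ≠ ⊥ → I.FG → ∃ J : Submodule R K, idealToK K I * J = 1

/-- The localization `R_P` of `R` at the prime `P`, viewed as an `R`-submodule of the quotient
field `K`. -/
noncomputable def locSub (P : Ideal R) (hP : P.IsPrime) : Submodule R K :=
  haveI := hP
  Subalgebra.toSubmodule
    (Localization.subalgebra K P.primeCompl
      (fun x hx => mem_nonZeroDivisors_of_ne_zero (fun h0 => hx (h0 ▸ P.zero_mem))))

/-- The `v`-operation of the valuation ring `R_P`, applied to the `R_P`-submodule of `K`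
generated by (the image of) `I`: it sends `I` to `(R_P : (R_P : IR_P))`. -/
noncomputable def vOp (P : Ideal R) (hP : P.IsPrime) (I : Submodule R K) : Submodule R K :=
  locSub K P hP / (locSub K P hP / (I * locSub K P hP))

/-- The quasi-spectrum of a (stable) semistar operation: the set of primes `P` such that
`P^⋆ ∩ R = P`. -/
def QSpec (f : Submodule R K → Submodule R K) : Set (Ideal R) :=
  {P | P.IsPrime ∧ f (idealToK K P) ⊓ 1 = idealToK K P}

/-- The pseudo-spectrum of a stable semistar operation: the set of primes `P` such that
`P^⋆ ∩ R = R` and `L^⋆ ∩ R = L` for some `P`-primary ideal `L`. -/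
def PsSpec (f : Submodule R K → Submodule R K) : Set (Ideal R) :=
  {P | P.IsPrime ∧ f (idealToK K P) ⊓ 1 = 1 ∧
    ∃ L : Ideal R, L.IsPrimary ∧ L.radical = P ∧ f (idealToK K L) ⊓ 1 = idealToK K L}

/-- The normalized stable version of a stable semistar operation `f`:
`I ↦ ⋂ {IR_P : P ∈ QSpec} ∩ ⋂ {(IR_P)^{v_{R_P}} : P ∈ PsSpec}`. -/
noncomputable def normStable (f : Submodule R K → Submodule R K) (I : Submodule R K) :
    Submodule R K :=
  (⨅ P : QSpec K f, I * locSub K P.1 P.2.1) ⊓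
    ⨅ P : PsSpec K f, vOp K P.1 P.2.1 I

end Defs

section Aux

variable {R K : Type*} [CommRing R] [IsDomain R] [Field K] [Algebra R K] [IsFractionRing R K]

lemma mem_locSub {P : Ideal R} (hP : P.IsPrime) {x : K} :
    x ∈ locSub K P hP ↔ ∃ a s : R, s ∉ P ∧ x * algebraMap R K s = algebraMap R K a := by
  have hmem : x ∈ locSub K P hP ↔ ∃ (a s : R) (hs : s ∈ P.primeCompl),
      x = IsLocalization.mk' K a ⟨s, mem_nonZeroDivisors_of_ne_zero
        (fun h0 => hs (by rw [h0]; exact P.zero_mem))⟩ := Iff.rfl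
  rw [hmem]
  constructor
  · rintro ⟨a, s, hs, rfl⟩
    have hs0 : algebraMap R K s ≠ 0 := by
      rw [map_ne_zero_iff _ (IsFractionRing.injective R K)]
      exact fun h => hs (by rw [h]; exact P.zero_mem)
    refine ⟨a, s, hs, ?_⟩
    rw [IsFractionRing.mk'_eq_div, div_mul_cancel₀ _ hs0]
  · rintro ⟨a, s, hs, hx⟩
    have hs0 : algebraMap R K s ≠ 0 := by
      rw [map_ne_zero_iff _ (IsFractionRing.injective R K)]
      exact fun h => hs (by rw [h]; exact P.zero_mem)
    exact ⟨a, s, hs, by rw [IsFractionRing.mk'_eq_div, eq_div_iff hs0]; exact hx⟩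

lemma one_le_locSub {P : Ideal R} (hP : P.IsPrime) : (1 : Submodule R K) ≤ locSub K P hP :=
  Submodule.one_le.mpr ((Subalgebra.mem_toSubmodule _).mpr (one_mem _))

lemma locSub_mul_self {P : Ideal R} (hP : P.IsPrime) :
    locSub K P hP * locSub K P hP = locSub K P hP :=
  Subalgebra.isIdempotentElem_toSubmodule _

lemma le_mul_locSub {P : Ideal R} (hP : P.IsPrime) (A : Submodule R K) :
    A ≤ A * locSub K P hP := by
  conv_lhs => rw [← mul_one A]
  exact mul_le_mul' le_rfl (one_le_locSub hP)

lemma locSub_mono {P M : Ideal R} (hP : P.IsPrime) (hM : M.IsPrime) (h : P ≤ M) :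
    locSub K M hM ≤ locSub K P hP := by
  intro x hx
  obtain ⟨a, s, hs, hx⟩ := (mem_locSub hM).mp hx
  exact (mem_locSub hP).mpr ⟨a, s, fun hsP => hs (h hsP), hx⟩

lemma locSub_mul_locSub {P M : Ideal R} (hP : P.IsPrime) (hM : M.IsPrime) (h : P ≤ M) :
    locSub K M hM * locSub K P hP = locSub K P hP := by
  refine le_antisymm ?_ ?_
  · calc locSub K M hM * locSub K P hP ≤ locSub K P hP * locSub K P hP :=
        mul_le_mul' (locSub_mono hP hM h) le_rfl
      _ = locSub K P hP := locSub_mul_self hP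
  · conv_lhs => rw [← one_mul (locSub K P hP)]
    exact mul_le_mul' (one_le_locSub hM) le_rfl

lemma mem_idealToK {I : Ideal R} {x : K} :
    x ∈ idealToK K I ↔ ∃ a ∈ I, algebraMap R K a = x := by
  simp [idealToK, Submodule.mem_map, Algebra.linearMap_apply]

/-- Denominator-clearing: an element of `I R_Q` can be multiplied into `I` by an element
outside `Q`. -/
lemma exists_denom {Q : Ideal R} (hQ : Q.IsPrime) (A : Ideal R) {y : K}
    (hy : y ∈ idealToK K A * locSub K Q hQ) :
    ∃ s ∉ Q, ∃ a ∈ A, algebraMap R K s * y = algebraMap R K a := by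
  refine Submodule.mul_induction_on hy ?_ ?_
  · rintro m hm v hv
    obtain ⟨a₀, ha₀, rfl⟩ := mem_idealToK.mp hm
    obtain ⟨r, s, hs, hv⟩ := (mem_locSub hQ).mp hv
    refine ⟨s, hs, a₀ * r, Ideal.mul_mem_right _ _ ha₀, ?_⟩
    rw [map_mul]
    calc algebraMap R K s * (algebraMap R K a₀ * v)
        = algebraMap R K a₀ * (v * algebraMap R K s) := by ring
      _ = algebraMap R K a₀ * algebraMap R K r := by rw [hv]
  · rintro x y ⟨s₁, hs₁, a₁, ha₁, h₁⟩ ⟨s₂, hs₂, a₂, ha₂, h₂⟩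
    refine ⟨s₁ * s₂, fun h => (hQ.mem_or_mem h).elim hs₁ hs₂,
      s₂ * a₁ + s₁ * a₂, Ideal.add_mem _ (Ideal.mul_mem_left _ _ ha₁)
        (Ideal.mul_mem_left _ _ ha₂), ?_⟩
    rw [map_add, map_mul, map_mul, map_mul, ← h₁, ← h₂]
    ring

/-- In a Prüfer domain, any two principal ideals become comparable after extending to `R_Q`. -/
lemma prufer_cmp_elem (hR : IsPruferDomain (R := R) K) {Q : Ideal R} (hQ : Q.IsPrime) (a b : R) :
    algebraMap R K a ∈ idealToK K (Ideal.span {b}) * locSub K Q hQ ∨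
    algebraMap R K b ∈ idealToK K (Ideal.span {a}) * locSub K Q hQ := by
  rcases eq_or_ne a 0 with rfl | ha
  · exact Or.inl (by simpa using Submodule.zero_mem _)
  rcases eq_or_ne b 0 with rfl | hb
  · exact Or.inr (by simpa using Submodule.zero_mem _)
  set S : Ideal R := Ideal.span {a, b} with hSdef
  have haS : a ∈ S := Ideal.subset_span (by simp)
  have hbS : b ∈ S := Ideal.subset_span (by simp)
  have hS0 : S ≠ ⊥ := by
    intro h
    have haS' := haS
    rw [h] at haS'
    exact ha (by simpa using haS')
  obtain ⟨J, hJ⟩ := hR S hS0 (Submodule.fg_span ((Set.finite_singleton b).insert a))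
  have h1 : (1 : K) ∈ idealToK K S * J := by
    rw [hJ]; exact Submodule.mem_one.mpr ⟨1, map_one _⟩
  have hsub : idealToK K S * J ≤
      (algebraMap R K a) • J ⊔ (algebraMap R K b) • J := by
    refine Submodule.mul_le.mpr ?_
    rintro m hm j hj
    obtain ⟨s, hsS, rfl⟩ := mem_idealToK.mp hm
    obtain ⟨r, t, hrt⟩ := Ideal.mem_span_pair.mp hsS
    have heq : algebraMap R K s * j =
        algebraMap R K a • (r • j) + algebraMap R K b • (t • j) := by
      rw [← hrt]
      simp only [smul_eq_mul, Algebra.smul_def, map_add, map_mul]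
      ring
    rw [heq]
    exact Submodule.add_mem_sup
      (Submodule.smul_mem_pointwise_smul _ _ _ (J.smul_mem r hj))
      (Submodule.smul_mem_pointwise_smul _ _ _ (J.smul_mem t hj))
  obtain ⟨u, hu, v, hv, huv⟩ := Submodule.mem_sup.mp (hsub h1)
  rw [← SetLike.mem_coe, Submodule.coe_pointwise_smul] at hu hv
  obtain ⟨j₁, hj₁, rfl⟩ := Set.mem_smul_set.mp hu
  obtain ⟨j₂, hj₂, rfl⟩ := Set.mem_smul_set.mp hv
  simp only [smul_eq_mul] at huv
  have memS : ∀ c ∈ S, ∀ j ∈ J, algebraMap R K c * j ∈ (1 : Submodule R K) := by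
    intro c hc j hj
    rw [← hJ]
    exact Submodule.mul_mem_mul (mem_idealToK.mpr ⟨c, hc, rfl⟩) hj
  obtain ⟨r₁, hr₁⟩ := Submodule.mem_one.mp (memS a haS j₁ hj₁)
  obtain ⟨r₂, hr₂⟩ := Submodule.mem_one.mp (memS b hbS j₂ hj₂)
  have hr12 : r₁ + r₂ = 1 := by
    apply IsFractionRing.injective R K
    rw [map_add, map_one, hr₁, hr₂, huv]
  have hror : r₁ ∉ Q ∨ r₂ ∉ Q := by
    by_contra h
    push_neg at h
    exact hQ.ne_top (Q.eq_top_iff_one.mpr (hr12 ▸ Q.add_mem h.1 h.2))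
  rcases hror with h₁ | h₂
  · -- r₁ ∉ Q : show b ∈ (a) R_Q
    obtain ⟨r₃, hr₃⟩ := Submodule.mem_one.mp (memS b hbS j₁ hj₁)
    have hr₁0 : algebraMap R K r₁ ≠ 0 := by
      rw [map_ne_zero_iff _ (IsFractionRing.injective R K)]
      exact fun h => h₁ (by rw [h]; exact Q.zero_mem)
    have hmul : algebraMap R K b * algebraMap R K r₁ = algebraMap R K a * algebraMap R K r₃ := by
      rw [hr₁, hr₃]; ring
    have key : algebraMap R K b =
        algebraMap R K a * (algebraMap R K r₃ * (algebraMap R K r₁)⁻¹) := by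
      field_simp
      linear_combination hmul
    refine Or.inr ?_
    rw [key]
    exact Submodule.mul_mem_mul (mem_idealToK.mpr ⟨a, Ideal.mem_span_singleton_self a, rfl⟩)
      ((mem_locSub hQ).mpr ⟨r₃, r₁, h₁, by
        rw [mul_assoc, inv_mul_cancel₀ hr₁0, mul_one]⟩)
  · -- r₂ ∉ Q : show a ∈ (b) R_Q
    obtain ⟨r₄, hr₄⟩ := Submodule.mem_one.mp (memS a haS j₂ hj₂)
    have hr₂0 : algebraMap R K r₂ ≠ 0 := by
      rw [map_ne_zero_iff _ (IsFractionRing.injective R K)]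
      exact fun h => h₂ (by rw [h]; exact Q.zero_mem)
    have hmul : algebraMap R K a * algebraMap R K r₂ = algebraMap R K b * algebraMap R K r₄ := by
      rw [hr₂, hr₄]; ring
    have key : algebraMap R K a =
        algebraMap R K b * (algebraMap R K r₄ * (algebraMap R K r₂)⁻¹) := by
      field_simp
      linear_combination hmul
    refine Or.inl ?_
    rw [key]
    exact Submodule.mul_mem_mul (mem_idealToK.mpr ⟨b, Ideal.mem_span_singleton_self b, rfl⟩)
      ((mem_locSub hQ).mpr ⟨r₄, r₂, h₂, by
        rw [mul_assoc, inv_mul_cancel₀ hr₂0, mul_one]⟩)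

/-- In a Prüfer domain, extensions of ideals to `R_Q` are totally ordered. -/
lemma prufer_cmp_ideal (hR : IsPruferDomain (R := R) K) {Q : Ideal R} (hQ : Q.IsPrime)
    (A B : Ideal R) :
    idealToK K A * locSub K Q hQ ≤ idealToK K B * locSub K Q hQ ∨
    idealToK K B * locSub K Q hQ ≤ idealToK K A * locSub K Q hQ := by
  by_cases h : idealToK K A ≤ idealToK K B * locSub K Q hQ
  · refine Or.inl ?_
    calc idealToK K A * locSub K Q hQ
        ≤ (idealToK K B * locSub K Q hQ) * locSub K Q hQ := mul_le_mul' h le_rfl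
      _ = idealToK K B * locSub K Q hQ := by rw [mul_assoc, locSub_mul_self]
  · refine Or.inr ?_
    obtain ⟨x, hxA, hxB⟩ := SetLike.not_le_iff_exists.mp h
    obtain ⟨a, haA, rfl⟩ := mem_idealToK.mp hxA
    have hBle : idealToK K B ≤ idealToK K A * locSub K Q hQ := by
      rintro y hy
      obtain ⟨b, hbB, rfl⟩ := mem_idealToK.mp hy
      rcases prufer_cmp_elem hR hQ a b with hcase | hcase
      · exfalso
        apply hxB
        refine mul_le_mul' (Submodule.map_mono ?_) le_rfl hcase
        exact Ideal.span_le.mpr (Set.singleton_subset_iff.mpr hbB)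
      · refine mul_le_mul' (Submodule.map_mono ?_) le_rfl hcase
        exact Ideal.span_le.mpr (Set.singleton_subset_iff.mpr haA)
    calc idealToK K B * locSub K Q hQ
        ≤ (idealToK K A * locSub K Q hQ) * locSub K Q hQ := mul_le_mul' hBle le_rfl
      _ = idealToK K A * locSub K Q hQ := by rw [mul_assoc, locSub_mul_self]

end Aux


/-- Let `R` be a Prüfer domain and `I` a proper ideal whose radical is the prime `P`. If `L` is
an ideal with radical `P` and `LR_P ⊊ IR_P`, then `L ⊆ I`. -/
theorem le_of_locSub_lt {R K : Type*} [CommRing R] [IsDomain R] [Field K] [Algebra R K]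
    [IsFractionRing R K]
    (hR : IsPruferDomain (R := R) K)
    (I : Ideal R) (hI : I ≠ ⊤) (P : Ideal R) (hP : P.IsPrime) (hIrad : I.radical = P)
    (L : Ideal R) (hLrad : L.radical = P)
    (hlt : idealToK K L * locSub K P hP < idealToK K I * locSub K P hP) :
    L ≤ I := by
  intro x hxL
  by_contra hxI
  set C : Ideal R := I.colon (Ideal.span {x}) with hCdef
  have hC : C ≠ ⊤ := by
    intro h
    exact hxI (by simpa using Ideal.mem_colon_span_singleton.mp (h ▸ Submodule.mem_top : (1 : R) ∈ C))
  obtain ⟨M, hM, hCM⟩ := Ideal.exists_le_maximal C hC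
  have hMp : M.IsPrime := hM.isPrime
  have hPM : P ≤ M := by
    intro p hp
    rw [← hIrad] at hp
    obtain ⟨n, hn⟩ := hp
    have : p ^ n ∈ C := Ideal.mem_colon_span_singleton.mpr (I.mul_mem_right x hn)
    exact hMp.mem_of_pow_mem n (hCM this)
  rcases prufer_cmp_ideal hR hMp L I with hLI | hIL
  · have hx1 : algebraMap R K x ∈ idealToK K I * locSub K M hMp :=
      hLI (le_mul_locSub hMp _ (mem_idealToK.mpr ⟨x, hxL, rfl⟩))
    obtain ⟨s, hs, a, haI, heq⟩ := exists_denom hMp I hx1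
    have hsx : s * x ∈ I := by
      have : algebraMap R K (s * x) = algebraMap R K a := by rw [map_mul]; exact heq
      have := IsFractionRing.injective R K this
      exact this ▸ haI
    exact hs (hCM (Ideal.mem_colon_span_singleton.mpr hsx))
  · refine hlt.not_ge ?_
    calc idealToK K I * locSub K P hP
        = (idealToK K I * locSub K M hMp) * locSub K P hP := by
          rw [mul_assoc, locSub_mul_locSub hP hMp hPM]
      _ ≤ (idealToK K L * locSub K M hMp) * locSub K P hP := mul_le_mul' hIL le_rfl
      _ = idealToK K L * locSub K P hP := by
          rw [mul_assoc, locSub_mul_locSub hP hMp hPM]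
end

section
/- Let R be a Prüfer domain and let I be a proper ideal of R whose radical is a prime ideal P. Then I contains a P-primary ideal of R. -/
open Pointwise

section Aux
variable {R K : Type*} [CommRing R] [IsDomain R] [Field K] [Algebra R K] [IsFractionRing R K]

set_option linter.unusedSectionVars false

lemma locChain' (hR : IsPruferDomain (R := R) K) (x y : R) (M : Ideal R) (hM : M.IsPrime) :
    ∃ w ∉ M, w * x ∈ Ideal.span {y} ∨ w * y ∈ Ideal.span {x} := by
  have h1M : (1 : R) ∉ M := fun h => hM.ne_top ((Ideal.eq_top_iff_one M).2 h)
  rcases eq_or_ne x 0 with rfl | hx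
  · exact ⟨1, h1M, Or.inl (by simp)⟩
  set φ := algebraMap R K with hφ
  have hinj : Function.Injective φ := IsFractionRing.injective R K
  have hJne : Ideal.span {x, y} ≠ (⊥ : Ideal R) := by
    intro h
    exact hx (Ideal.span_eq_bot.1 h x (by simp))
  obtain ⟨S, hS⟩ := hR (Ideal.span {x, y}) hJne (Submodule.fg_span (Set.toFinite _))
  have hmap : idealToK K (Ideal.span {x, y}) =
      Submodule.span R {φ x} ⊔ Submodule.span R {φ y} := by
    show Submodule.map (Algebra.linearMap R K) (Submodule.span R {x, y}) = _
    rw [Submodule.map_span, ← Submodule.span_union, Set.singleton_union, Set.image_insert_eq,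
      Set.image_singleton]
    rfl
  have hStoR : ∀ (a : R), a ∈ ({x, y} : Set R) → ∀ u ∈ S, ∃ c : R, φ a * u = φ c := by
    intro a ha u hu
    have hmem : φ a * u ∈ idealToK K (Ideal.span {x, y}) * S :=
      Submodule.mul_mem_mul ⟨a, Ideal.subset_span ha, rfl⟩ hu
    rw [hS, Submodule.one_eq_range] at hmem
    obtain ⟨c, hc⟩ := hmem
    exact ⟨c, hc.symm⟩
  rw [hmap, Submodule.sup_mul, Submodule.span_singleton_mul, Submodule.span_singleton_mul] at hS
  have h1 : (1 : K) ∈ φ x • S ⊔ φ y • S := by rw [hS]; exact Submodule.one_le.1 le_rfl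
  rw [Submodule.mem_sup] at h1
  obtain ⟨xs, hxs, yt, hyt, hsum⟩ := h1
  obtain ⟨s, hs, rfl⟩ : ∃ s ∈ S, φ x • s = xs := hxs
  obtain ⟨t, ht, rfl⟩ : ∃ t ∈ S, φ y • t = yt := hyt
  obtain ⟨e, he⟩ := hStoR x (by simp) s hs
  obtain ⟨f, hf⟩ := hStoR y (by simp) t ht
  obtain ⟨d, hd⟩ := hStoR y (by simp) s hs
  obtain ⟨g, hg⟩ := hStoR x (by simp) t ht
  have hef : e + f = 1 := by
    apply hinj
    rw [map_add, map_one, ← he, ← hf]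
    simpa [smul_eq_mul] using hsum
  have hcases : e ∉ M ∨ f ∉ M := by
    by_contra h
    push_neg at h
    exact h1M (hef ▸ M.add_mem h.1 h.2)
  rcases hcases with hnot | hnot
  · refine ⟨e, hnot, Or.inr ?_⟩
    rw [Ideal.mem_span_singleton]
    refine ⟨d, hinj ?_⟩
    rw [map_mul, map_mul, ← he, ← hd]
    ring
  · refine ⟨f, hnot, Or.inl ?_⟩
    rw [Ideal.mem_span_singleton]
    refine ⟨g, hinj ?_⟩
    rw [map_mul, map_mul, ← hf, ← hg]
    ring

lemma mem_of_locally' (I : Ideal R) (r : R)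
    (h : ∀ M : Ideal R, M.IsMaximal → I ≤ M → ∃ w ∉ M, w * r ∈ I) : r ∈ I := by
  have htop : I.colon (Ideal.span {r}) = ⊤ := by
    by_contra hne
    obtain ⟨M, hMmax, hle⟩ := Ideal.exists_le_maximal _ hne
    have hIM : I ≤ M :=
      le_trans (fun x hx => Ideal.mem_colon_span_singleton.2 (I.mul_mem_right r hx)) hle
    obtain ⟨w, hw, hwr⟩ := h M hMmax hIM
    exact hw (hle (Ideal.mem_colon_span_singleton.2 hwr))
  have : (1 : R) ∈ I.colon (Ideal.span {r}) := htop ▸ Submodule.mem_top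
  simpa using Ideal.mem_colon_span_singleton.1 this


end Aux


/-- Let `R` be a Prüfer domain and `I` a proper ideal whose radical is the prime `P`. Then `I`
contains a `P`-primary ideal. -/
theorem exists_primary_le {R K : Type*} [CommRing R] [IsDomain R] [Field K] [Algebra R K]
    [IsFractionRing R K]
    (hR : IsPruferDomain (R := R) K)
    (I : Ideal R) (hI : I ≠ ⊤) (P : Ideal R) (hP : P.IsPrime) (hIrad : I.radical = P) :
    ∃ L : Ideal R, L.IsPrimary ∧ L.radical = P ∧ L ≤ I := by
  have h1P : (1 : R) ∉ P := fun h => hP.ne_top ((Ideal.eq_top_iff_one P).2 h)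
  by_cases hA : ∃ a, a ∈ I ∧ a ≠ 0 ∧
      ∀ p ∈ P, ∃ n : ℕ, ∃ u, u ∉ P ∧ u * p ^ n ∈ Ideal.span {a}
  · -- branched case: saturation of aP works
    obtain ⟨a, haI, ha0, hstar⟩ := hA
    set A₀ : Ideal R := Ideal.span {a} * P with hA₀
    have hSAT : ∀ M : Ideal R, M.IsPrime → P ≤ M → ∀ r s : R, s ∉ P → s * r ∈ A₀ →
        ∃ w ∉ M, w * r ∈ A₀ := by
      intro M hM hPM r s hs hsr
      have h1M : (1 : R) ∉ M := fun h => hM.ne_top ((Ideal.eq_top_iff_one M).2 h)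
      obtain ⟨z, hzP, hza⟩ := Ideal.mem_span_singleton_mul.1 hsr
      have hs0 : s ≠ 0 := fun h => hs (h ▸ P.zero_mem)
      rcases eq_or_ne z 0 with rfl | hz0
      · have : r = 0 := by
          rcases mul_eq_zero.1 (hza.symm.trans (by ring) : s * r = 0) with h | h
          · exact absurd h hs0
          · exact h
        exact ⟨1, h1M, by simp [this]⟩
      obtain ⟨w, hw, hc⟩ := locChain' hR s z M hM
      rcases hc with hc | hc
      · -- w * s ∈ span {z} ⊆ P : impossible
        exfalso
        have hwP : w ∉ P := fun h => hw (hPM h)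
        have : w * s ∈ P := (Ideal.span_singleton_le_iff_mem P).2 hzP hc
        rcases hP.mem_or_mem this with h | h
        · exact hwP h
        · exact hs h
      · -- w * z = s * c
        obtain ⟨c, hcz⟩ := Ideal.mem_span_singleton.1 hc
        have hcP : c ∈ P := by
          have : s * c ∈ P := hcz ▸ P.mul_mem_left w hzP
          rcases hP.mem_or_mem this with h | h
          · exact absurd h hs
          · exact h
        refine ⟨w, hw, Ideal.mem_span_singleton_mul.2 ⟨c, hcP, ?_⟩⟩
        apply mul_left_cancel₀ hs0
        calc s * (a * c) = a * (s * c) := by ring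
          _ = a * (w * z) := by rw [hcz]
          _ = w * (a * z) := by ring
          _ = w * (s * r) := by rw [hza]
          _ = s * (w * r) := by ring
    set L : Ideal R :=
      { carrier := {r | ∃ u, u ∉ P ∧ u * r ∈ A₀}
        add_mem' := by
          rintro r1 r2 ⟨u1, hu1, h1⟩ ⟨u2, hu2, h2⟩
          refine ⟨u1 * u2, fun h => (hP.mem_or_mem h).elim hu1 hu2, ?_⟩
          have : u1 * u2 * (r1 + r2) = u2 * (u1 * r1) + u1 * (u2 * r2) := by ring
          rw [this]
          exact A₀.add_mem (A₀.mul_mem_left u2 h1) (A₀.mul_mem_left u1 h2)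
        zero_mem' := ⟨1, h1P, by simp⟩
        smul_mem' := by
          rintro c r ⟨u, hu, h⟩
          refine ⟨u, hu, ?_⟩
          have : u * (c • r) = c * (u * r) := by simp [smul_eq_mul]; ring
          rw [this]
          exact A₀.mul_mem_left c h } with hLdef
    have hmemL : ∀ r : R, r ∈ L ↔ ∃ u, u ∉ P ∧ u * r ∈ A₀ := fun r => Iff.rfl
    have hLP : L ≤ P := by
      rintro r ⟨u, hu, hur⟩
      have : u * r ∈ P := Ideal.mul_le_right hur
      rcases hP.mem_or_mem this with h | h
      · exact absurd h hu
      · exact h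
    have hLI : L ≤ I := by
      rintro r ⟨u, hu, hur⟩
      apply mem_of_locally'
      intro M hMmax hIM
      have hPM : P ≤ M := hIrad ▸ hMmax.isPrime.radical_le_iff.2 hIM
      obtain ⟨w, hw, hwr⟩ := hSAT M hMmax.isPrime hPM r u hu hur
      exact ⟨w, hw, (Ideal.mul_le_left.trans ((Ideal.span_singleton_le_iff_mem I).2 haI)) hwr⟩
    have hLrad : L.radical = P := by
      apply le_antisymm
      · exact (Ideal.radical_mono hLP).trans (le_of_eq hP.radical)
      · intro p hp
        obtain ⟨n, u, hu, hun⟩ := hstar p hp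
        obtain ⟨t, ht⟩ := Ideal.mem_span_singleton.1 hun
        refine Ideal.mem_radical_iff.2 ⟨n + 1, ⟨u, hu, ?_⟩⟩
        refine Ideal.mem_span_singleton_mul.2 ⟨t * p, P.mul_mem_left t hp, ?_⟩
        calc a * (t * p) = a * t * p := by ring
          _ = u * p ^ n * p := by rw [← ht]
          _ = u * p ^ (n + 1) := by ring
    refine ⟨L, Ideal.isPrimary_iff.mpr ⟨?_, ?_⟩, hLrad, hLI⟩
    · intro h
      exact hP.ne_top ((Ideal.eq_top_iff_one P).2 (hLP (h ▸ Submodule.mem_top)))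
    · intro x y hxy
      rw [or_iff_not_imp_right]
      intro hy
      have hyP : y ∉ P := fun h => hy (hLrad ▸ h)
      obtain ⟨u, hu, h⟩ := hxy
      have huy : u * y ∉ P := fun h => (hP.mem_or_mem h).elim hu hyP
      have h' : (u * y) * x ∈ A₀ := by
        have : (u * y) * x = u * (x * y) := by ring
        rw [this]; exact h
      obtain ⟨w, hw, hwx⟩ := hSAT P hP le_rfl x (u * y) huy h'
      exact ⟨w, hw, hwx⟩
  · -- unbranched case: I = P
    refine ⟨P, hP.isPrimary, hP.radical, ?_⟩
    intro p hp
    rcases eq_or_ne p 0 with rfl | hp0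
    · exact I.zero_mem
    obtain ⟨m, hm⟩ := Ideal.mem_radical_iff.1 (hIrad.symm ▸ hp : p ∈ I.radical)
    apply mem_of_locally'
    intro M hMmax hIM
    have hPM : P ≤ M := hIrad ▸ hMmax.isPrime.radical_le_iff.2 hIM
    have hnp : ¬ ∀ r ∈ P, ∃ n : ℕ, ∃ u, u ∉ M ∧ u * r ^ n ∈ Ideal.span {p} := by
      intro hall
      apply hA
      refine ⟨p ^ m, hm, pow_ne_zero m hp0, ?_⟩
      intro r hr
      obtain ⟨n, u, hu, hun⟩ := hall r hr
      have huP : u ∉ P := fun h => hu (hPM h)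
      refine ⟨n * m, u ^ m, fun h => huP (hP.mem_of_pow_mem m h), ?_⟩
      rw [Ideal.mem_span_singleton] at hun ⊢
      have : u ^ m * r ^ (n * m) = (u * r ^ n) ^ m := by
        rw [mul_pow, ← pow_mul]
      rw [this]
      exact pow_dvd_pow_of_dvd hun m
    push_neg at hnp
    obtain ⟨x, hxP, hxbad⟩ := hnp
    obtain ⟨n, hxn⟩ := Ideal.mem_radical_iff.1 (hIrad.symm ▸ hxP : x ∈ I.radical)
    obtain ⟨w, hw, hc⟩ := locChain' hR p (x ^ n) M hMmax.isPrime
    rcases hc with hc | hc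
    · exact ⟨w, hw, (Ideal.span_singleton_le_iff_mem I).2 hxn hc⟩
    · exact absurd hc (hxbad n w hw)
end

section
/- Let R be a Prüfer domain, let ⋆ be a stable semistar operation on R with normalized stable version ⋆̃, and let I be a proper ideal of R such that the set Min(I) of minimal primes over I is finite. Then 1 ∈ I^⋆ if and only if 1 ∈ I^⋆̃. -/
open Pointwise

set_option linter.unusedSectionVars false
set_option linter.unusedVariables false
section Aux

open Pointwise

variable {R K : Type*} [CommRing R] [IsDomain R] [Field K] [Algebra R K] [IsFractionRing R K]

namespace SemistarAux

lemma kinj : Function.Injective (algebraMap R K) := IsFractionRing.injective R K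

lemma mem_idealToK {I : Ideal R} {x : K} :
    x ∈ idealToK K I ↔ ∃ i ∈ I, algebraMap R K i = x := by
  simp [idealToK, Submodule.mem_map, Algebra.linearMap_apply]

lemma algebraMap_mem_idealToK {I : Ideal R} {r : R} :
    algebraMap R K r ∈ idealToK K I ↔ r ∈ I := by
  rw [mem_idealToK]
  constructor
  · rintro ⟨i, hi, h⟩; rwa [← kinj h]
  · exact fun h => ⟨r, h, rfl⟩

lemma idealToK_mono {I J : Ideal R} (h : I ≤ J) : idealToK K I ≤ idealToK K J :=
  Submodule.map_mono h

lemma mem_smul_sub {x y : K} {N : Submodule R K} : y ∈ x • N ↔ ∃ n ∈ N, x * n = y := by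
  constructor
  · rintro ⟨n, hn, rfl⟩; exact ⟨n, hn, rfl⟩
  · rintro ⟨n, hn, rfl⟩; exact ⟨n, hn, rfl⟩

lemma smul_mem_smul_sub {x n : K} {N : Submodule R K} (hn : n ∈ N) : x * n ∈ x • N :=
  mem_smul_sub.2 ⟨n, hn, rfl⟩


lemma algebraMap_ne_zero {s : R} (hs : s ≠ 0) : algebraMap R K s ≠ 0 :=
  (map_ne_zero_iff _ (kinj (K := K))).2 hs

lemma ne_zero_of_not_mem {P : Ideal R} {s : R} (hs : s ∉ P) : s ≠ 0 :=
  fun h => hs (h ▸ P.zero_mem)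

lemma mem_locSub {P : Ideal R} (hP : P.IsPrime) {x : K} :
    x ∈ locSub K P hP ↔ ∃ a s : R, s ∉ P ∧ x * algebraMap R K s = algebraMap R K a := by
  rw [locSub, Subalgebra.mem_toSubmodule]
  constructor
  · rintro ⟨a, s, hs, rfl⟩
    refine ⟨a, s, hs, ?_⟩
    rw [IsFractionRing.mk'_eq_div, div_mul_cancel₀]
    exact algebraMap_ne_zero (ne_zero_of_not_mem hs)
  · rintro ⟨a, s, hs, h⟩
    refine ⟨a, s, hs, ?_⟩
    rw [IsFractionRing.mk'_eq_div, eq_div_iff (algebraMap_ne_zero (ne_zero_of_not_mem hs))]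
    exact h

lemma div_mem_locSub {P : Ideal R} (hP : P.IsPrime) {a s : R} (hs : s ∉ P) :
    algebraMap R K a * (algebraMap R K s)⁻¹ ∈ locSub K P hP := by
  rw [mem_locSub hP]
  refine ⟨a, s, hs, ?_⟩
  have hs0 : algebraMap R K s ≠ 0 := algebraMap_ne_zero (ne_zero_of_not_mem hs)
  field_simp

lemma one_mem_locSub {P : Ideal R} (hP : P.IsPrime) : (1 : K) ∈ locSub K P hP :=
  (mem_locSub hP).2 ⟨1, 1, hP.1 ∘ (Ideal.eq_top_iff_one P).2, by rw [one_mul]⟩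

lemma algebraMap_mem_locSub {P : Ideal R} (hP : P.IsPrime) (r : R) :
    algebraMap R K r ∈ locSub K P hP := by
  have : algebraMap R K r = r • (1 : K) := by rw [Algebra.smul_def, mul_one]
  rw [this]
  exact Submodule.smul_mem _ r (one_mem_locSub hP)

lemma locSub_mul_self {P : Ideal R} (hP : P.IsPrime) :
    locSub K P hP * locSub K P hP = locSub K P hP := by
  apply le_antisymm
  · apply Submodule.mul_le.2
    intro m hm n hn
    rw [locSub, Subalgebra.mem_toSubmodule] at *
    exact mul_mem hm hn
  · intro x hx
    simpa using Submodule.mul_mem_mul hx (one_mem_locSub hP)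

section Star

variable {f : Submodule R K → Submodule R K}

/-- The localizing system associated to the operation. -/
def Ff (f : Submodule R K → Submodule R K) (J : Ideal R) : Prop :=
  (1 : K) ∈ f (idealToK K J)

lemma idealToK_le_one {J : Ideal R} : idealToK K J ≤ (1 : Submodule R K) := by
  intro x hx
  obtain ⟨i, _, rfl⟩ := mem_idealToK.1 hx
  exact Submodule.mem_one.2 ⟨i, rfl⟩

lemma one_mem_one : (1 : K) ∈ (1 : Submodule R K) := Submodule.mem_one.2 ⟨1, map_one _⟩

variable (hf : IsSemistarOperation K f)
include hf

lemma F_top : Ff f ⊤ :=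
  hf.1 _ (mem_idealToK.2 ⟨1, trivial, map_one _⟩)

lemma F_mono {J J' : Ideal R} (h : J ≤ J') (hJ : Ff f J) : Ff f J' :=
  hf.2.2.1 _ _ (idealToK_mono h) hJ

lemma one_mem_star_one : (1 : K) ∈ f 1 := hf.1 _ one_mem_one

/-- Key: `r ∈ C^⋆` iff the colon ideal `(C : r)` is in the localizing system.
The `←` direction needs only the semistar axioms; `→` needs stability. -/
lemma star_mem_of_colon {C : Ideal R} {r : R} (h : Ff f (C.colon (Ideal.span {r}))) :
    algebraMap R K r ∈ f (idealToK K C) := by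
  set u : K := algebraMap R K r with hu
  have h1 : u * 1 ∈ u • f (idealToK K (C.colon (Ideal.span {r}))) := smul_mem_smul_sub h
  rw [mul_one, ← hf.2.2.2] at h1
  refine hf.2.2.1 _ _ ?_ h1
  intro x hx
  obtain ⟨n, hn, rfl⟩ := mem_smul_sub.1 hx
  obtain ⟨j, hj, rfl⟩ := mem_idealToK.1 hn
  rw [hu, ← map_mul]
  exact mem_idealToK.2 ⟨r * j, by rw [mul_comm]; exact Ideal.mem_colon_span_singleton.1 hj, rfl⟩

lemma colon_of_star_mem (hstable : IsStableOperation K f) {C : Ideal R} {r : R}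
    (h : algebraMap R K r ∈ f (idealToK K C)) : Ff f (C.colon (Ideal.span {r})) := by
  by_cases hr : r = 0
  · subst hr
    refine F_mono hf (fun a _ => Ideal.mem_colon_span_singleton.2 ?_) (F_top hf)
    simpa using C.zero_mem
  have hu : algebraMap R K r ≠ 0 := algebraMap_ne_zero hr
  have key : idealToK K (C.colon (Ideal.span {r})) =
      (algebraMap R K r)⁻¹ • idealToK K C ⊓ 1 := by
    apply le_antisymm
    · intro x hx
      obtain ⟨j, hj, rfl⟩ := mem_idealToK.1 hx
      refine ⟨mem_smul_sub.2 ⟨algebraMap R K (r * j), ?_, ?_⟩, idealToK_le_one hx⟩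
      · exact mem_idealToK.2 ⟨r * j, by rw [mul_comm]; exact Ideal.mem_colon_span_singleton.1 hj, rfl⟩
      · rw [map_mul, ← mul_assoc, inv_mul_cancel₀ hu, one_mul]
    · rintro x ⟨hx1, hx2⟩
      obtain ⟨a, rfl⟩ := Submodule.mem_one.1 hx2
      obtain ⟨c, hc, hcx⟩ := mem_smul_sub.1 hx1
      refine mem_idealToK.2 ⟨a, Ideal.mem_colon_span_singleton.2 ?_, rfl⟩
      have : algebraMap R K (a * r) ∈ idealToK K C := by
        rw [map_mul, ← hcx, mul_comm ((algebraMap R K r)⁻¹) c, mul_assoc,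
          inv_mul_cancel₀ hu, mul_one]
        exact hc
      exact algebraMap_mem_idealToK.1 this
  rw [Ff, key, hstable, hf.2.2.2]
  constructor
  · exact mem_smul_sub.2 ⟨algebraMap R K r, h, inv_mul_cancel₀ hu⟩
  · exact one_mem_star_one hf

lemma F_gabriel {J C : Ideal R} (hJ : Ff f J)
    (h : ∀ j ∈ J, Ff f (C.colon (Ideal.span {j}))) : Ff f C := by
  have hle : idealToK K J ≤ f (idealToK K C) := by
    intro x hx
    obtain ⟨j, hj, rfl⟩ := mem_idealToK.1 hx
    exact star_mem_of_colon hf (h j hj)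
  have := hf.2.2.1 _ _ hle hJ
  rw [hf.2.1] at this
  exact this

lemma F_mul {J J' : Ideal R} (hJ : Ff f J) (hJ' : Ff f J') : Ff f (J * J') := by
  have hle : idealToK K J' ≤ f (idealToK K (J * J')) := by
    intro x hx
    obtain ⟨j, hj, rfl⟩ := mem_idealToK.1 hx
    refine star_mem_of_colon hf (F_mono hf ?_ hJ)
    intro a ha
    exact Ideal.mem_colon_span_singleton.2 (Ideal.mul_mem_mul ha hj)
  have := hf.2.2.1 _ _ hle hJ'
  rw [hf.2.1] at this
  exact this

lemma F_pow {J : Ideal R} (hJ : Ff f J) (n : ℕ) : Ff f (J ^ n) := by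
  induction n with
  | zero => simpa using F_top hf
  | succ n ih => rw [pow_succ]; exact F_mul hf ih hJ

/-- A prime not in the localizing system is a quasi-⋆-prime. -/
lemma quasi_of_not_F (hstable : IsStableOperation K f) {p : Ideal R} (hp : p.IsPrime)
    (h : ¬ Ff f p) : f (idealToK K p) ⊓ 1 = idealToK K p := by
  apply le_antisymm
  · rintro x ⟨hx1, hx2⟩
    obtain ⟨a, rfl⟩ := Submodule.mem_one.1 hx2
    have hcol := colon_of_star_mem hf hstable hx1
    by_cases ha : a ∈ p
    · exact mem_idealToK.2 ⟨a, ha, rfl⟩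
    · exfalso
      apply h
      refine F_mono hf ?_ hcol
      intro b hb
      have := Ideal.mem_colon_span_singleton.1 hb
      exact ((hp.mem_or_mem this).resolve_right ha)
  · exact le_inf (hf.1 _) idealToK_le_one

lemma F_inf_one_eq_one {Q : Ideal R} (hQ : Ff f Q) : f (idealToK K Q) ⊓ 1 = 1 := by
  apply le_antisymm inf_le_right
  refine le_inf ?_ le_rfl
  intro x hx
  obtain ⟨a, rfl⟩ := Submodule.mem_one.1 hx
  have : algebraMap R K a = a • (1 : K) := by rw [Algebra.smul_def, mul_one]
  rw [this]
  exact Submodule.smul_mem _ a hQ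

end Star
section Sat

/-- The saturation `A R_Q ∩ R` of an ideal `A` at a prime `Q`, defined elementarily. -/
def satId (Q : Ideal R) (hQ : Q.IsPrime) (A : Ideal R) : Ideal R where
  carrier := {r | ∃ s, s ∉ Q ∧ s * r ∈ A}
  add_mem' := by
    rintro a b ⟨s, hs, hsa⟩ ⟨t, ht, htb⟩
    refine ⟨s * t, fun h => (hQ.mem_or_mem h).elim hs ht, ?_⟩
    have h2 : s * t * (a + b) = t * (s * a) + s * (t * b) := by ring
    rw [h2]
    exact A.add_mem (A.mul_mem_left _ hsa) (A.mul_mem_left _ htb)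
  zero_mem' := ⟨1, fun h => hQ.1 ((Ideal.eq_top_iff_one Q).2 h), by simpa using A.zero_mem⟩
  smul_mem' := by
    rintro c a ⟨s, hs, hsa⟩
    refine ⟨s, hs, ?_⟩
    have h2 : s * (c • a) = c * (s * a) := by rw [smul_eq_mul]; ring
    rw [h2]
    exact A.mul_mem_left _ hsa

lemma mem_satId {Q : Ideal R} {hQ : Q.IsPrime} {A : Ideal R} {r : R} :
    r ∈ satId Q hQ A ↔ ∃ s, s ∉ Q ∧ s * r ∈ A := Iff.rfl

lemma le_satId {Q : Ideal R} {hQ : Q.IsPrime} {A : Ideal R} : A ≤ satId Q hQ A :=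
  fun r hr => ⟨1, fun h => hQ.1 ((Ideal.eq_top_iff_one Q).2 h), by simpa using hr⟩

lemma satId_mono {Q : Ideal R} {hQ : Q.IsPrime} {A B : Ideal R} (h : A ≤ B) :
    satId Q hQ A ≤ satId Q hQ B := by
  rintro r ⟨s, hs, hsr⟩
  exact ⟨s, hs, h hsr⟩

lemma satId_satId {Q : Ideal R} {hQ : Q.IsPrime} {A : Ideal R} :
    satId Q hQ (satId Q hQ A) = satId Q hQ A := by
  refine le_antisymm ?_ le_satId
  rintro r ⟨s, hs, t, ht, hh⟩
  exact ⟨t * s, fun h => (hQ.mem_or_mem h).elim ht hs, by rwa [mul_assoc]⟩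

/-- saturation at a bigger prime is saturated at a smaller prime -/
lemma satId_of_le {P Q : Ideal R} {hP : P.IsPrime} {hQ : Q.IsPrime} (hle : Q ≤ P)
    {A : Ideal R} : satId P hP (satId Q hQ A) = satId Q hQ A := by
  refine le_antisymm ?_ le_satId
  rintro r ⟨s, hs, t, ht, hh⟩
  refine ⟨t * s, fun h => (hQ.mem_or_mem h).elim ht (fun hsQ => hs (hle hsQ)), by rwa [mul_assoc]⟩

lemma satId_prime {Q p : Ideal R} {hQ : Q.IsPrime} (hp : p.IsPrime) (hle : p ≤ Q) :
    satId Q hQ p = p := by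
  refine le_antisymm ?_ le_satId
  rintro r ⟨s, hs, hsr⟩
  exact (hp.mem_or_mem hsr).resolve_left (fun h => hs (hle h))

lemma satId_eq_top_iff {Q : Ideal R} {hQ : Q.IsPrime} {A : Ideal R} :
    (1 : R) ∈ satId Q hQ A ↔ ∃ s, s ∉ Q ∧ s ∈ A := by
  rw [mem_satId]
  simp

lemma satId_le_prime {Q : Ideal R} {hQ : Q.IsPrime} {A : Ideal R} (h : A ≤ Q) :
    satId Q hQ A ≤ Q := by
  rintro r ⟨s, hs, hsr⟩
  exact (hQ.mem_or_mem (h hsr)).resolve_left hs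

end Sat

section Bridge

lemma mem_mul_locSub_iff {C : Ideal R} {Q : Ideal R} (hQ : Q.IsPrime) {x : K} :
    x ∈ idealToK K C * locSub K Q hQ ↔ ∃ s, s ∉ Q ∧ x * algebraMap R K s ∈ idealToK K C := by
  constructor
  · intro hx
    refine Submodule.mul_induction_on hx ?_ ?_
    · intro m hm n hn
      obtain ⟨a, s, hs, hns⟩ := (mem_locSub hQ).1 hn
      refine ⟨s, hs, ?_⟩
      rw [mul_assoc, hns]
      have : m * algebraMap R K a = a • m := by rw [Algebra.smul_def, mul_comm]
      rw [this]
      exact Submodule.smul_mem _ a hm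
    · rintro y z ⟨s, hs, hys⟩ ⟨t, ht, hzt⟩
      refine ⟨s * t, fun h => (hQ.mem_or_mem h).elim hs ht, ?_⟩
      have h2 : (y + z) * algebraMap R K (s * t) =
          t • (y * algebraMap R K s) + s • (z * algebraMap R K t) := by
        rw [map_mul, Algebra.smul_def, Algebra.smul_def]
        ring
      rw [h2]
      exact Submodule.add_mem _ (Submodule.smul_mem _ _ hys) (Submodule.smul_mem _ _ hzt)
  · rintro ⟨s, hs, hxs⟩
    have hs0 : algebraMap R K s ≠ 0 := algebraMap_ne_zero (ne_zero_of_not_mem hs)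
    have : x = (x * algebraMap R K s) * (algebraMap R K 1 * (algebraMap R K s)⁻¹) := by
      rw [map_one, one_mul]
      field_simp
    rw [this]
    exact Submodule.mul_mem_mul hxs (div_mem_locSub hQ hs)

lemma algebraMap_mem_mul_locSub {C : Ideal R} {Q : Ideal R} (hQ : Q.IsPrime) {r : R} :
    algebraMap R K r ∈ idealToK K C * locSub K Q hQ ↔ r ∈ satId Q hQ C := by
  rw [mem_mul_locSub_iff hQ, mem_satId]
  constructor
  · rintro ⟨s, hs, h⟩
    rw [← map_mul] at h
    exact ⟨s, hs, by rw [mul_comm]; exact algebraMap_mem_idealToK.1 h⟩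
  · rintro ⟨s, hs, h⟩
    exact ⟨s, hs, by rw [← map_mul, mul_comm]; exact algebraMap_mem_idealToK.2 h⟩

lemma one_mem_mul_locSub {C : Ideal R} {Q : Ideal R} (hQ : Q.IsPrime) :
    (1 : K) ∈ idealToK K C * locSub K Q hQ ↔ (1 : R) ∈ satId Q hQ C := by
  rw [← map_one (algebraMap R K)]
  exact algebraMap_mem_mul_locSub hQ

end Bridge

section Val

lemma exists_add_one_split {Q : Ideal R} (hQ : Q.IsPrime) {r₁ r₂ : R} (h : r₁ + r₂ = 1) :
    r₁ ∉ Q ∨ r₂ ∉ Q := by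
  by_contra hc
  push_neg at hc
  exact hQ.1 ((Ideal.eq_top_iff_one Q).2 (h ▸ Q.add_mem hc.1 hc.2))

/-- In a Prüfer domain, every localization at a prime is a valuation ring of `K`. -/
lemma valuation_tot (hR : IsPruferDomain (R := R) K) {Q : Ideal R} (hQ : Q.IsPrime)
    {x : K} (hx : x ≠ 0) : x ∈ locSub K Q hQ ∨ x⁻¹ ∈ locSub K Q hQ := by
  obtain ⟨⟨a, b⟩, hab⟩ := IsLocalization.mk'_surjective (nonZeroDivisors R) x
  dsimp only at hab
  have hb0 : (b : R) ≠ 0 := nonZeroDivisors.ne_zero b.2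
  have hxb : x * algebraMap R K b = algebraMap R K a := by
    rw [← hab, IsFractionRing.mk'_eq_div, div_mul_cancel₀ _ (algebraMap_ne_zero hb0)]
  have ha0 : a ≠ 0 := by
    intro h
    apply hx
    have := hxb
    rw [h, map_zero] at this
    exact (mul_eq_zero.1 this).resolve_right (algebraMap_ne_zero hb0)
  have hspan : Ideal.span {a, (b : R)} ≠ ⊥ := by
    intro h
    apply ha0
    have : a ∈ Ideal.span {a, (b : R)} := Ideal.subset_span (by simp)
    rwa [h, Ideal.mem_bot] at this
  obtain ⟨J, hJ⟩ := hR _ hspan (Submodule.fg_span (Set.toFinite _))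
  have h1 : (1 : K) ∈ idealToK K (Ideal.span {a, (b : R)}) * J := by rw [hJ]; exact one_mem_one
  have hrep : ∃ u ∈ J, ∃ v ∈ J,
      algebraMap R K a * u + algebraMap R K b * v = (1 : K) := by
    have : ∀ z ∈ idealToK K (Ideal.span {a, (b : R)}) * J, ∃ u ∈ J, ∃ v ∈ J,
        algebraMap R K a * u + algebraMap R K b * v = z := by
      intro z hz
      refine Submodule.mul_induction_on hz ?_ ?_
      · intro m hm n hn
        obtain ⟨i, hi, rfl⟩ := mem_idealToK.1 hm
        obtain ⟨r, t, hrt⟩ := Ideal.mem_span_pair.1 hi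
        refine ⟨r • n, Submodule.smul_mem _ _ hn, t • n, Submodule.smul_mem _ _ hn, ?_⟩
        rw [← hrt, map_add, map_mul, map_mul, Algebra.smul_def, Algebra.smul_def]
        ring
      · rintro y z ⟨u, hu, v, hv, huv⟩ ⟨u', hu', v', hv', huv'⟩
        exact ⟨u + u', Submodule.add_mem _ hu hu', v + v', Submodule.add_mem _ hv hv', by
          rw [mul_add, mul_add, ← huv, ← huv']; ring⟩
    exact this 1 h1
  obtain ⟨u, hu, v, hv, huv⟩ := hrep
  have hau : algebraMap R K a * u ∈ (1 : Submodule R K) := by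
    rw [← hJ]
    exact Submodule.mul_mem_mul (mem_idealToK.2 ⟨a, Ideal.subset_span (by simp), rfl⟩) hu
  have hbv : algebraMap R K b * v ∈ (1 : Submodule R K) := by
    rw [← hJ]
    exact Submodule.mul_mem_mul (mem_idealToK.2 ⟨(b : R), Ideal.subset_span (by simp), rfl⟩) hv
  have hav : algebraMap R K a * v ∈ (1 : Submodule R K) := by
    rw [← hJ]
    exact Submodule.mul_mem_mul (mem_idealToK.2 ⟨a, Ideal.subset_span (by simp), rfl⟩) hv
  have hbu : algebraMap R K b * u ∈ (1 : Submodule R K) := by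
    rw [← hJ]
    exact Submodule.mul_mem_mul (mem_idealToK.2 ⟨(b : R), Ideal.subset_span (by simp), rfl⟩) hu
  obtain ⟨r₁, hr₁⟩ := Submodule.mem_one.1 hau
  obtain ⟨r₂, hr₂⟩ := Submodule.mem_one.1 hbv
  have hsum : r₁ + r₂ = 1 := by
    apply kinj (K := K)
    rw [map_add, hr₁, hr₂, huv, map_one]
  rcases exists_add_one_split hQ hsum with h | h
  · -- r₁ = a*u not in Q : x⁻¹ = b/a : x⁻¹ * r₁ = b * u ∈ R
    right
    obtain ⟨t, ht⟩ := Submodule.mem_one.1 hbu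
    refine (mem_locSub hQ).2 ⟨t, r₁, h, ?_⟩
    have hxinv : x⁻¹ * algebraMap R K a = algebraMap R K b := by
      rw [← hxb]
      have hfa : algebraMap R K b ≠ 0 := algebraMap_ne_zero hb0
      field_simp
    rw [hr₁, ← mul_assoc, hxinv, ht]
  · -- r₂ = b*v not in Q : x * r₂ = a * v ∈ R
    left
    obtain ⟨t, ht⟩ := Submodule.mem_one.1 hav
    refine (mem_locSub hQ).2 ⟨t, r₂, h, ?_⟩
    rw [hr₂, ← mul_assoc, hxb, ht]

/-- comparability: all `locSub`-stable submodules are comparable with principal ones. -/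
lemma cmp (hR : IsPruferDomain (R := R) K) {Q : Ideal R} (hQ : Q.IsPrime)
    {X : Submodule R K} (hX : X * locSub K Q hQ ≤ X) {w : K} (hw : w ≠ 0) :
    X ≤ w • locSub K Q hQ ∨ w ∈ X := by
  by_cases h : ∀ x ∈ X, x ∈ w • locSub K Q hQ
  · exact Or.inl h
  push_neg at h
  obtain ⟨x, hxX, hxw⟩ := h
  have hx0 : x ≠ 0 := by
    intro h0
    exact hxw (h0 ▸ Submodule.zero_mem _)
  right
  rcases valuation_tot hR hQ (x := w * x⁻¹) (by simp [hw, hx0]) with h | h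
  · have : w = x * (w * x⁻¹) := by field_simp
    rw [this]
    exact hX (Submodule.mul_mem_mul hxX h)
  · exfalso
    apply hxw
    rw [mul_inv, inv_inv] at h
    refine mem_smul_sub.2 ⟨(w * x⁻¹)⁻¹, by rwa [mul_inv, inv_inv], ?_⟩
    field_simp

lemma smul_locSub_le {Q : Ideal R} (hQ : Q.IsPrime) {Z : Submodule R K}
    (hZ : Z * locSub K Q hQ ≤ Z) {z : K} (hz : z ∈ Z) : z • locSub K Q hQ ≤ Z := by
  intro y hy
  obtain ⟨l, hl, rfl⟩ := mem_smul_sub.1 hy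
  exact hZ (Submodule.mul_mem_mul hz hl)

lemma mul_locSub_stable {Q : Ideal R} (hQ : Q.IsPrime) (C : Ideal R) :
    (idealToK K C * locSub K Q hQ) * locSub K Q hQ ≤ idealToK K C * locSub K Q hQ := by
  rw [mul_assoc, locSub_mul_self hQ]

end Val
section Forward

variable {f : Submodule R K → Submodule R K}

lemma locSub_mul_mem {Q : Ideal R} {hQ : Q.IsPrime} {x y : K}
    (hx : x ∈ locSub K Q hQ) (hy : y ∈ locSub K Q hQ) : x * y ∈ locSub K Q hQ := by
  rw [locSub, Subalgebra.mem_toSubmodule] at *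
  exact mul_mem hx hy

lemma satId_primary {p L₀ : Ideal R} (hp : p.IsPrime) (hprim : L₀.IsPrimary)
    (hrad : L₀.radical = p) : satId p hp L₀ = L₀ := by
  refine le_antisymm ?_ le_satId
  rintro r ⟨s, hs, hsr⟩
  rcases (Ideal.isPrimary_iff.mp hprim).2 (show r * s ∈ L₀ by rwa [mul_comm]) with h | h
  · exact h
  · exact absurd (hrad ▸ h) hs

lemma one_mem_div_iff {X Y : Submodule R K} : (1 : K) ∈ X / Y ↔ Y ≤ X := by
  rw [Submodule.mem_div_iff_forall_mul_mem]
  constructor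
  · intro h y hy; simpa using h y hy
  · intro h y hy; simpa using h hy

variable (hf : IsSemistarOperation K f)
include hf

lemma forward_vOp (hR : IsPruferDomain (R := R) K) {p : Ideal R} (hp : p.IsPrime)
    {L₀ : Ideal R} (hprim : L₀.IsPrimary) (hrad : L₀.radical = p)
    (hquasi : f (idealToK K L₀) ⊓ 1 = idealToK K L₀)
    {I : Ideal R} (hst : (1 : K) ∈ f (idealToK K I)) :
    (1 : K) ∈ vOp K p hp (idealToK K I) := by
  rw [vOp, one_mem_div_iff]
  intro x hx
  rw [Submodule.mem_div_iff_forall_mul_mem] at hx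
  by_contra hxL
  have hx0 : x ≠ 0 := fun h => hxL (h ▸ Submodule.zero_mem _)
  have hxinv : x⁻¹ ∈ locSub K p hp :=
    (valuation_tot hR hp hx0).resolve_left hxL
  obtain ⟨a, s, hs, hxs⟩ := (mem_locSub hp).1 hxinv
  have hfs : algebraMap R K s ≠ 0 := algebraMap_ne_zero (ne_zero_of_not_mem hs)
  have hxa : x * algebraMap R K a = algebraMap R K s := by
    rw [← hxs, ← mul_assoc, mul_inv_cancel₀ hx0, one_mul]
  have ha : a ∈ p := by
    by_contra hap
    apply hxL
    have ha0 : algebraMap R K a ≠ 0 := algebraMap_ne_zero (ne_zero_of_not_mem hap)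
    have : x = algebraMap R K s * (algebraMap R K a)⁻¹ := by
      rw [← hxa]; field_simp
    rw [this]
    exact div_mem_locSub hp hap
  -- the ideal C = { r | x * r ∈ R_p }
  set C : Ideal R :=
    { carrier := {r | x * algebraMap R K r ∈ locSub K p hp}
      add_mem' := by
        intro u v hu hv
        simp only [Set.mem_setOf_eq, map_add, mul_add] at *
        exact Submodule.add_mem _ hu hv
      zero_mem' := by simp only [Set.mem_setOf_eq, map_zero, mul_zero]; exact Submodule.zero_mem _
      smul_mem' := by
        intro c u hu
        simp only [Set.mem_setOf_eq, smul_eq_mul, map_mul] at *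
        have h2 : x * (algebraMap R K c * algebraMap R K u) = algebraMap R K c * (x * algebraMap R K u) := by ring
        rw [h2, ← Algebra.smul_def]
        exact Submodule.smul_mem _ c hu } with hC
  have hIC : I ≤ C := by
    intro i hi
    have : algebraMap R K i ∈ idealToK K I * locSub K p hp := by
      rw [show algebraMap R K i = algebraMap R K i * 1 by rw [mul_one]]
      exact Submodule.mul_mem_mul (mem_idealToK.2 ⟨i, hi, rfl⟩) (one_mem_locSub hp)
    exact hx _ this
  have hpow : ∀ n : ℕ, ∀ r ∈ C ^ n, x ^ n * algebraMap R K r ∈ locSub K p hp := by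
    intro n
    induction n with
    | zero =>
      intro r _
      rw [pow_zero, one_mul]
      exact algebraMap_mem_locSub hp r
    | succ n ih =>
      intro r hr
      rw [pow_succ] at hr
      refine Submodule.mul_induction_on hr ?_ ?_
      · intro m hm c hc
        have h2 : x ^ (n + 1) * algebraMap R K (m * c) =
            (x ^ n * algebraMap R K m) * (x * algebraMap R K c) := by
          rw [map_mul, pow_succ]; ring
        rw [h2]
        exact locSub_mul_mem (ih m hm) hc
      · intro y z hy hz
        rw [map_add, mul_add]
        exact Submodule.add_mem _ hy hz
  obtain ⟨n, han⟩ := Ideal.mem_radical_iff.1 (hrad.symm ▸ ha)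
  have hCL : C ^ n ≤ L₀ := by
    intro r hr
    have hl := hpow n r hr
    obtain ⟨c', t, ht, hlt⟩ := (mem_locSub hp).1 hl
    have key : algebraMap R K (s ^ n * r * t) = algebraMap R K (a ^ n * c') := by
      simp only [map_mul, map_pow]
      rw [← hxa, mul_pow]
      rw [show x ^ n * algebraMap R K a ^ n * algebraMap R K r * algebraMap R K t
          = algebraMap R K a ^ n * (x ^ n * algebraMap R K r * algebraMap R K t) from by ring,
        hlt]
    have hmem : s ^ n * r * t ∈ L₀ := by
      have := kinj (K := K) key
      rw [this]
      exact L₀.mul_mem_right _ han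
    have hst' : s ^ n * t ∉ p := by
      intro hmem'
      rcases hp.mem_or_mem hmem' with h | h
      · exact hs (hp.mem_of_pow_mem _ h)
      · exact ht h
    have : r ∈ satId p hp L₀ := ⟨s ^ n * t, hst', by
      have : s ^ n * t * r = s ^ n * r * t := by ring
      rwa [this]⟩
    rwa [satId_primary hp hprim hrad] at this
  have hFL : (1 : K) ∈ f (idealToK K L₀) :=
    F_mono hf hCL (F_pow hf (F_mono hf hIC hst) n)
  have : (1 : K) ∈ f (idealToK K L₀) ⊓ 1 := ⟨hFL, one_mem_one⟩
  rw [hquasi] at this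
  obtain ⟨e, he, hee⟩ := mem_idealToK.1 this
  rw [show e = 1 from kinj (K := K) (by rw [hee, map_one])] at he
  exact hprim.1 ((Ideal.eq_top_iff_one L₀).2 he)

end Forward
section Sandwich

variable {f : Submodule R K → Submodule R K}

lemma exists_unit_swap (hR : IsPruferDomain (R := R) K) {P M : Ideal R} (hP : P.IsPrime)
    (hM : M.IsPrime) (hPM : P ≤ M) {s b : R} (hs : s ∉ P) (hb : b ∈ P) :
    ∃ u c, u ∉ M ∧ u * b = c * s := by
  by_cases hb0 : b = 0
  · exact ⟨1, 0, fun h => hM.1 ((Ideal.eq_top_iff_one M).2 h), by simp [hb0]⟩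
  have hs0 : s ≠ 0 := ne_zero_of_not_mem hs
  have hz : algebraMap R K b * (algebraMap R K s)⁻¹ ≠ 0 := by
    simp [algebraMap_ne_zero hb0, algebraMap_ne_zero hs0]
  rcases valuation_tot hR hM hz with h | h
  · obtain ⟨c, u, hu, huc⟩ := (mem_locSub hM).1 h
    refine ⟨u, c, hu, kinj (K := K) ?_⟩
    have hfs : algebraMap R K s ≠ 0 := algebraMap_ne_zero hs0
    rw [map_mul, map_mul]
    calc algebraMap R K u * algebraMap R K b
        = algebraMap R K b * (algebraMap R K s)⁻¹ * algebraMap R K u * algebraMap R K s := by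
          field_simp; try ring
      _ = algebraMap R K c * algebraMap R K s := by rw [huc]
  · rw [mul_inv, inv_inv] at h
    obtain ⟨d, v, hv, hdv⟩ := (mem_locSub hM).1 h
    exfalso
    have hfb : algebraMap R K b ≠ 0 := algebraMap_ne_zero hb0
    have heq : algebraMap R K (s * v) = algebraMap R K (d * b) := by
      rw [map_mul, map_mul]
      calc algebraMap R K s * algebraMap R K v
          = (algebraMap R K b)⁻¹ * algebraMap R K s * algebraMap R K v * algebraMap R K b := by
            field_simp; try ring
        _ = algebraMap R K d * algebraMap R K b := by rw [hdv]
    have hsv : s * v = d * b := kinj (K := K) heq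
    have : s * v ∈ P := hsv ▸ P.mul_mem_left d hb
    rcases hP.mem_or_mem this with h' | h'
    · exact hs h'
    · exact hv (hPM h')

lemma term_sandwich (hR : IsPruferDomain (R := R) K) {P M I : Ideal R} (hP : P.IsPrime)
    (hM : M.IsPrime) (hPM : P ≤ M) {a b : R} (ha : a ∈ satId P hP I) (hb : b ∈ P) :
    a * b ∈ satId M hM I := by
  obtain ⟨s, hs, hsa⟩ := ha
  obtain ⟨u, c, hu, huc⟩ := exists_unit_swap hR hP hM hPM hs hb
  refine ⟨u, hu, ?_⟩
  have : u * (a * b) = c * (s * a) := by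
    rw [show u * (a * b) = a * (u * b) from by ring, huc]; ring
  rw [this]
  exact I.mul_mem_left c hsa

variable (hf : IsSemistarOperation K f)
include hf

lemma sandwich (hR : IsPruferDomain (R := R) K) {I : Ideal R} (hI : I ≠ ⊤)
    (hmin : I.minimalPrimes.Finite)
    (h : ∀ P (hP : P ∈ I.minimalPrimes), Ff f P ∧ Ff f (satId P hP.1.1 I)) : Ff f I := by
  classical
  set g : Ideal R → Ideal R := fun P => if hP : P.IsPrime then satId P hP I * P else ⊤ with hg
  set S := hmin.toFinset with hS
  have hT : Ff f (S.prod g) := by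
    refine Finset.prod_induction g (Ff f) (fun a b ha hb => F_mul hf ha hb) ?_ ?_
    · rw [Ideal.one_eq_top]
      exact F_top hf
    · intro P hPS
      have hPmin : P ∈ I.minimalPrimes := hmin.mem_toFinset.1 hPS
      have hPp : P.IsPrime := hPmin.1.1
      rw [hg]
      simp only [dif_pos hPp]
      exact F_mul hf ((h P hPmin).2) ((h P hPmin).1)
  refine F_mono hf ?_ hT
  intro w hw
  by_contra hwI
  have hcol : I.colon (Ideal.span {w}) ≠ ⊤ := by
    intro hcontra
    apply hwI
    have : (1 : R) ∈ I.colon (Ideal.span {w}) := hcontra ▸ Submodule.mem_top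
    simpa using Ideal.mem_colon_span_singleton.1 this
  obtain ⟨M, hMmax, hMcol⟩ := Ideal.exists_le_maximal _ hcol
  have hM : M.IsPrime := hMmax.isPrime
  have hIM : I ≤ M := le_trans (fun i hi => Ideal.mem_colon_span_singleton.2 (I.mul_mem_right w hi)) hMcol
  haveI := hM
  obtain ⟨P, hPmin, hPM⟩ := Ideal.exists_minimalPrimes_le (J := M) hIM
  have hPp : P.IsPrime := hPmin.1.1
  have hPS : P ∈ S := hmin.mem_toFinset.2 hPmin
  have hgP : g P ≤ satId M hM I := by
    rw [hg]
    simp only [dif_pos hPp]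
    refine Ideal.mul_le.2 ?_
    intro a ha b hb
    exact term_sandwich hR hPp hM hPM ha hb
  have hTle : S.prod g ≤ satId M hM I := by
    rw [← Finset.mul_prod_erase S g hPS]
    calc g P * (S.erase P).prod g ≤ g P * ⊤ := Ideal.mul_mono_right le_top
      _ ≤ satId M hM I := by rw [Ideal.mul_top]; exact hgP
  obtain ⟨u, hu, huw⟩ := hTle hw
  exact hu (hMcol (Ideal.mem_colon_span_singleton.2 huw))

end Sandwich
section Machine

variable {f : Submodule R K → Submodule R K}

lemma div_in_locSub {Q : Ideal R} (hQ : Q.IsPrime) {a b : R} (hb0 : b ≠ 0)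
    (h : algebraMap R K a * (algebraMap R K b)⁻¹ ∈ locSub K Q hQ) :
    ∃ u c, u ∉ Q ∧ u * a = c * b := by
  obtain ⟨c, u, hu, huc⟩ := (mem_locSub hQ).1 h
  refine ⟨u, c, hu, kinj (K := K) ?_⟩
  have hfb : algebraMap R K b ≠ 0 := algebraMap_ne_zero hb0
  rw [map_mul, map_mul]
  calc algebraMap R K u * algebraMap R K a
      = algebraMap R K a * (algebraMap R K b)⁻¹ * algebraMap R K u * algebraMap R K b := by
        field_simp; try ring
    _ = algebraMap R K c * algebraMap R K b := by rw [huc]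

lemma inv_not_mem_locSub {Q : Ideal R} (hQ : Q.IsPrime) {y : R} (hy : y ∈ Q) (hy0 : y ≠ 0) :
    (algebraMap R K y)⁻¹ ∉ locSub K Q hQ := by
  intro h
  obtain ⟨c, u, hu, huc⟩ := (mem_locSub hQ).1 h
  apply hu
  have : algebraMap R K u = algebraMap R K (y * c) := by
    rw [map_mul, ← huc]
    have hfy : algebraMap R K y ≠ 0 := algebraMap_ne_zero hy0
    field_simp
  rw [kinj (K := K) this]
  exact Q.mul_mem_right c hy

lemma smul_locSub_stable {Q : Ideal R} (hQ : Q.IsPrime) (w : K) :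
    (w • locSub K Q hQ) * locSub K Q hQ ≤ w • locSub K Q hQ := by
  intro t ht
  refine Submodule.mul_induction_on ht ?_ ?_
  · intro m hm n hn
    obtain ⟨l, hl, rfl⟩ := mem_smul_sub.1 hm
    rw [mul_assoc]
    exact smul_mem_smul_sub (locSub_mul_mem hl hn)
  · intro a b ha hb
    exact Submodule.add_mem _ ha hb

variable (hf : IsSemistarOperation K f) (hstable : IsStableOperation K f)
  (hR : IsPruferDomain (R := R) K)
include hf hstable hR

set_option maxHeartbeats 1000000 in
lemma machine {I P : Ideal R} (hP : P.IsPrime)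
    (hIF : ¬ Ff f (satId P hP I))
    (H1 : ∀ p : Ideal R, p.IsPrime → ¬ Ff f p → ¬ I ≤ p)
    (H2 : ∀ (Q : Ideal R) (hQ : Q.IsPrime), Q ∈ PsSpec K f → ∀ x : K,
      (∀ w ∈ idealToK K I * locSub K Q hQ, x * w ∈ locSub K Q hQ) → x ∈ locSub K Q hQ) :
    False := by
  classical
  set Ib : Ideal R := satId P hP I with hIb
  have hIIb : I ≤ Ib := le_satId
  have hIbsat : satId P hP Ib = Ib := satId_satId
  -- the family of P-saturated non-F ideals containing Ib
  set Scal : Set (Ideal R) := {A | satId P hP A = A ∧ Ib ≤ A ∧ ¬ Ff f A} with hScal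
  have hIbScal : Ib ∈ Scal := ⟨hIbsat, le_rfl, hIF⟩
  -- members are comparable
  have hchain : ∀ A ∈ Scal, ∀ B ∈ Scal, A ≤ B ∨ B ≤ A := by
    intro A hA B hB
    by_cases hAB : A ≤ B
    · exact Or.inl hAB
    · right
      obtain ⟨a, haA, haB⟩ := SetLike.not_le_iff_exists.1 hAB
      intro b hbB
      by_cases hb0 : b = 0
      · exact hb0 ▸ A.zero_mem
      have ha0 : a ≠ 0 := fun h => haB (h ▸ B.zero_mem)
      have hq : algebraMap R K a * (algebraMap R K b)⁻¹ ≠ 0 := by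
        simp [algebraMap_ne_zero ha0, algebraMap_ne_zero hb0]
      rcases valuation_tot hR hP hq with h | h
      · exfalso
        obtain ⟨u, c, hu, huc⟩ := div_in_locSub hP hb0 h
        apply haB
        rw [← hB.1]
        exact ⟨u, hu, by rw [huc]; exact B.mul_mem_left c hbB⟩
      · rw [mul_inv, inv_inv] at h
        rw [mul_comm] at h
        obtain ⟨u, c, hu, huc⟩ := div_in_locSub hP ha0 h
        rw [← hA.1]
        exact ⟨u, hu, by rw [huc]; exact A.mul_mem_left c haA⟩
  -- the union of the family
  set QI : Ideal R :=
    { carrier := {r | ∃ A ∈ Scal, r ∈ A}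
      add_mem' := by
        rintro a b ⟨A, hA, haA⟩ ⟨B, hB, hbB⟩
        rcases hchain A hA B hB with h | h
        · exact ⟨B, hB, B.add_mem (h haA) hbB⟩
        · exact ⟨A, hA, A.add_mem haA (h hbB)⟩
      zero_mem' := ⟨Ib, hIbScal, Ib.zero_mem⟩
      smul_mem' := by
        rintro c a ⟨A, hA, haA⟩
        exact ⟨A, hA, A.smul_mem c haA⟩ } with hQI
  have hScal_le_QI : ∀ A ∈ Scal, A ≤ QI := fun A hA r hr => ⟨A, hA, hr⟩
  have hScal_le_P : ∀ A ∈ Scal, A ≤ P := by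
    intro A hA
    by_contra hle
    obtain ⟨a, haA, haP⟩ := SetLike.not_le_iff_exists.1 hle
    apply hA.2.2
    have h1 : (1 : R) ∈ A := by
      rw [← hA.1]
      exact ⟨a, haP, by simpa using haA⟩
    rw [show A = ⊤ from (Ideal.eq_top_iff_one A).2 h1]
    exact F_top hf
  have hQIP : QI ≤ P := by
    rintro r ⟨A, hA, hr⟩
    exact hScal_le_P A hA hr
  have hIbQI : Ib ≤ QI := hScal_le_QI Ib hIbScal
  -- saturations of Ib ⊔ (z) for z outside QI are in F
  have hC : ∀ z : R, z ∉ QI → Ff f (satId P hP (Ib ⊔ Ideal.span {z})) := by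
    intro z hz
    by_contra hF
    apply hz
    have : satId P hP (Ib ⊔ Ideal.span {z}) ∈ Scal :=
      ⟨satId_satId, le_trans le_sup_left le_satId, hF⟩
    exact hScal_le_QI _ this (le_satId (Submodule.mem_sup_right (Ideal.mem_span_singleton_self z)))
  have hQIprime : QI.IsPrime := by
    constructor
    · intro htop
      exact hP.1 (top_le_iff.1 (htop ▸ hQIP))
    · intro x y hxy
      by_contra hcon
      push_neg at hcon
      obtain ⟨hx, hy⟩ := hcon
      obtain ⟨A₀, hA₀, hxyA⟩ := hxy
      apply hA₀.2.2
      have hprod : satId P hP (Ib ⊔ Ideal.span {x}) * satId P hP (Ib ⊔ Ideal.span {y}) ≤ A₀ := by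
        refine Ideal.mul_le.2 ?_
        rintro c ⟨u, hu, huc⟩ d ⟨v, hv, hvd⟩
        rw [← hA₀.1]
        refine ⟨u * v, fun h => (hP.mem_or_mem h).elim hu hv, ?_⟩
        have hexp : u * v * (c * d) = (u * c) * (v * d) := by ring
        rw [hexp]
        obtain ⟨i₁, hi₁, e₁, he₁, heq₁⟩ := Submodule.mem_sup.1 huc
        obtain ⟨i₂, hi₂, e₂, he₂, heq₂⟩ := Submodule.mem_sup.1 hvd
        obtain ⟨r₁, hr₁⟩ := Ideal.mem_span_singleton'.1 he₁
        obtain ⟨r₂, hr₂⟩ := Ideal.mem_span_singleton'.1 he₂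
        rw [← heq₁, ← heq₂, ← hr₁, ← hr₂]
        have hexp2 : (i₁ + r₁ * x) * (i₂ + r₂ * y) =
            i₁ * (i₂ + r₂ * y) + (r₁ * x) * i₂ + (r₁ * r₂) * (x * y) := by ring
        rw [hexp2]
        exact A₀.add_mem (A₀.add_mem (A₀.mul_mem_right _ (hA₀.2.1 hi₁))
          (A₀.mul_mem_left _ (hA₀.2.1 hi₂))) (A₀.mul_mem_left _ hxyA)
      exact F_mono hf hprod (F_mul hf (hC x hx) (hC y hy))
  by_cases hQF : Ff f QI
  swap
  · exact H1 QI hQIprime hQF (le_trans hIIb hIbQI)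
  -- case QI ∈ F : build the pseudo-prime data
  set L₁ : Ideal R := satId QI hQIprime I with hL₁
  have hIbL₁ : Ib ≤ L₁ := by
    rintro r ⟨s, hs, hsr⟩
    exact ⟨s, fun h => hs (hQIP h), hsr⟩
  have hL₁sat : satId QI hQIprime L₁ = L₁ := satId_satId
  have hL₁Psat : satId P hP L₁ = L₁ := satId_of_le hQIP
  have hL₁F : ¬ Ff f L₁ := by
    intro hF
    apply hIF
    refine F_gabriel hf hF ?_
    intro z hz
    obtain ⟨s, hs, hsz⟩ := hz
    refine F_mono hf ?_ (hC s hs)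
    rintro c ⟨u, hu, huc⟩
    rw [Ideal.mem_colon_span_singleton]
    rw [← hIbsat]
    refine ⟨u, hu, ?_⟩
    obtain ⟨i, hi, e, he, heq⟩ := Submodule.mem_sup.1 huc
    obtain ⟨r, hr⟩ := Ideal.mem_span_singleton'.1 he
    have hexp : u * (c * z) = (u * c) * z := by ring
    rw [hexp, ← heq, ← hr]
    have hexp2 : (i + r * s) * z = z * i + r * (s * z) := by ring
    rw [hexp2]
    exact Ib.add_mem (Ib.mul_mem_left z hi) (Ib.mul_mem_left r (hIIb hsz))
  have hL₁Scal : L₁ ∈ Scal := ⟨hL₁Psat, hIbL₁, hL₁F⟩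
  have hL₁QI : L₁ ≤ QI := hScal_le_QI L₁ hL₁Scal
  -- the quasi closure L of L₁
  set L : Ideal R :=
    { carrier := {z | algebraMap R K z ∈ f (idealToK K L₁)}
      add_mem' := by
        intro a b ha hb
        simp only [Set.mem_setOf_eq, map_add] at *
        exact Submodule.add_mem _ ha hb
      zero_mem' := by simp only [Set.mem_setOf_eq, map_zero]; exact Submodule.zero_mem _
      smul_mem' := by
        intro c a ha
        simp only [Set.mem_setOf_eq, smul_eq_mul, map_mul] at *
        rw [← Algebra.smul_def]
        exact Submodule.smul_mem _ c ha } with hLdef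
  have hLK : idealToK K L = f (idealToK K L₁) ⊓ 1 := by
    apply le_antisymm
    · intro w hw
      obtain ⟨z, hz, rfl⟩ := mem_idealToK.1 hw
      exact ⟨hz, Submodule.mem_one.2 ⟨z, rfl⟩⟩
    · rintro w ⟨hw1, hw2⟩
      obtain ⟨a, rfl⟩ := Submodule.mem_one.1 hw2
      exact mem_idealToK.2 ⟨a, hw1, rfl⟩
  have hL₁L : L₁ ≤ L := fun z hz => hf.1 _ (mem_idealToK.2 ⟨z, hz, rfl⟩)
  have hLF : ¬ Ff f L := by
    intro hF
    apply hL₁F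
    have hle : idealToK K L ≤ f (idealToK K L₁) := fun w hw => (hLK ▸ hw).1
    have := hf.2.2.1 _ _ hle hF
    rwa [hf.2.1] at this
  have hLtop : L ≠ ⊤ := by
    intro h
    apply hL₁F
    have h1 : (1 : R) ∈ L := h ▸ Submodule.mem_top
    have h2 : algebraMap R K (1 : R) ∈ f (idealToK K L₁) := h1
    rwa [map_one] at h2
  -- L is QI-saturated
  have hLsat : ∀ s z : R, s ∉ QI → s * z ∈ L → z ∈ L := by
    intro s z hs hsz
    have hcolon : Ff f (L₁.colon (Ideal.span {z * s})) := by
      apply colon_of_star_mem hf hstable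
      have hsz' : algebraMap R K (s * z) ∈ f (idealToK K L₁) := hsz
      rw [show z * s = s * z from mul_comm z s]
      exact hsz'
    have hprod : L₁.colon (Ideal.span {z * s}) * satId P hP (Ib ⊔ Ideal.span {s}) ≤
        L₁.colon (Ideal.span {z}) := by
      refine Ideal.mul_le.2 ?_
      intro t ht c hc
      rw [Ideal.mem_colon_span_singleton] at ht ⊢
      obtain ⟨u, hu, huc⟩ := hc
      rw [← hL₁Psat]
      refine ⟨u, hu, ?_⟩
      obtain ⟨i, hi, e, he, heq⟩ := Submodule.mem_sup.1 huc
      obtain ⟨r, hr⟩ := Ideal.mem_span_singleton'.1 he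
      have hexp : u * (t * c * z) = (t * z) * (u * c) := by ring
      rw [hexp, ← heq, ← hr]
      have hexp2 : t * z * (i + r * s) = (t * z) * i + r * (t * (z * s)) := by ring
      rw [hexp2]
      exact L₁.add_mem (L₁.mul_mem_left _ (hIbL₁ hi)) (L₁.mul_mem_left r ht)
    exact star_mem_of_colon hf (F_mono hf hprod (F_mul hf hcolon (hC s hs)))
  have hLPsat : satId P hP L = L := by
    refine le_antisymm ?_ le_satId
    rintro z ⟨s, hs, hsz⟩
    exact hLsat s z (fun h => hs (hQIP h)) hsz
  have hLScal : L ∈ Scal := ⟨hLPsat, le_trans hIbL₁ hL₁L, hLF⟩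
  have hLQI : L ≤ QI := hScal_le_QI L hLScal
  -- radical of L is QI
  have hrad : L.radical = QI := by
    apply le_antisymm
    · rw [← hQIprime.radical]
      exact Ideal.radical_mono hLQI
    · intro y hyQI
      by_contra hy
      rw [Ideal.mem_radical_iff] at hy
      push_neg at hy
      have hy0 : y ≠ 0 := by
        intro h
        exact hy 1 (by rw [h, pow_one]; exact L.zero_mem)
      have hfy : algebraMap R K y ≠ 0 := algebraMap_ne_zero hy0
      have hyQI2 := hyQI
      obtain ⟨A₀, hA₀, hyA₀⟩ := hyQI2
      -- replace A₀ by its QI-saturation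
      set A' : Ideal R := satId QI hQIprime A₀ with hA'def
      have hA'F : ¬ Ff f A' := by
        intro hF
        apply hA₀.2.2
        refine F_gabriel hf hF ?_
        intro z hz
        obtain ⟨s, hs, hsz⟩ := hz
        refine F_mono hf ?_ (hC s hs)
        rintro c ⟨u, hu, huc⟩
        rw [Ideal.mem_colon_span_singleton]
        rw [← hA₀.1]
        refine ⟨u, hu, ?_⟩
        obtain ⟨i, hi, e, he, heq⟩ := Submodule.mem_sup.1 huc
        obtain ⟨r, hr⟩ := Ideal.mem_span_singleton'.1 he
        have hexp : u * (c * z) = z * (u * c) := by ring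
        rw [hexp, ← heq, ← hr]
        have hexp2 : z * (i + r * s) = z * i + r * (s * z) := by ring
        rw [hexp2]
        exact A₀.add_mem (A₀.mul_mem_left z (hA₀.2.1 hi)) (A₀.mul_mem_left r hsz)
      have hA'sat : satId QI hQIprime A' = A' := satId_satId
      have hA'Psat : satId P hP A' = A' := satId_of_le hQIP
      have hIbA' : Ib ≤ A' := le_trans (le_trans hA₀.2.1 le_satId) le_rfl
      have hA'QI : A' ≤ QI := hScal_le_QI A' ⟨hA'Psat, hIbA', hA'F⟩
      have hyA' : y ∈ A' := le_satId hyA₀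
      -- comparisons in the valuation ring R_QI
      set LQ := locSub K QI hQIprime with hLQ
      set X := idealToK K L₁ * LQ with hX
      have hXst : X * LQ ≤ X := mul_locSub_stable hQIprime L₁
      have hXY : ∀ n : ℕ, X ≤ (algebraMap R K y) ^ n • LQ := by
        intro n
        have hyn : (algebraMap R K y) ^ n ≠ 0 := pow_ne_zero _ hfy
        rcases cmp hR hQIprime hXst hyn with h | h
        · exact h
        · exfalso
          rw [← map_pow] at h
          have : y ^ n ∈ L₁ := by
            rw [hL₁, ← satId_satId (Q := QI) (hQ := hQIprime) (A := I)]
            exact (algebraMap_mem_mul_locSub hQIprime).1 h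
          exact hy n (hL₁L this)
      -- the prime p = ∩ y^n R_QI
      set p : Ideal R :=
        { carrier := {r | ∀ n : ℕ, algebraMap R K r ∈ (algebraMap R K y) ^ n • LQ}
          add_mem' := by
            intro a b ha hb n
            rw [map_add]
            exact Submodule.add_mem _ (ha n) (hb n)
          zero_mem' := by
            intro n
            rw [map_zero]
            exact Submodule.zero_mem _
          smul_mem' := by
            intro c a ha n
            rw [smul_eq_mul, map_mul, ← Algebra.smul_def]
            exact Submodule.smul_mem _ c (ha n) } with hpdef
      have hinvy : (algebraMap R K y)⁻¹ ∉ LQ := inv_not_mem_locSub hQIprime hyQI hy0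
      have hyp : y ∉ p ∨ True := Or.inr trivial
      have hpprime : p.IsPrime := by
        constructor
        · intro htop
          have h1 : (1 : R) ∈ p := htop ▸ Submodule.mem_top
          have := h1 1
          rw [map_one, pow_one] at this
          obtain ⟨l, hl, hyl⟩ := mem_smul_sub.1 this
          apply hinvy
          have : l = (algebraMap R K y)⁻¹ := by
            field_simp at hyl ⊢
            rw [mul_comm] at hyl
            exact (mul_comm _ _).trans hyl
          rwa [← this]
        · intro r₁ r₂ h12
          by_contra hcon
          push_neg at hcon
          obtain ⟨h1, h2⟩ := hcon
          simp only [hpdef, Submodule.mem_mk, AddSubmonoid.mem_mk, AddSubsemigroup.mem_mk,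
            Set.mem_setOf_eq, not_forall] at h1 h2
          obtain ⟨m, hm⟩ := h1
          obtain ⟨k, hk⟩ := h2
          have hr₁0 : r₁ ≠ 0 := by
            intro h
            exact hm (by rw [h, map_zero]; exact Submodule.zero_mem _)
          have hr₂0 : r₂ ≠ 0 := by
            intro h
            exact hk (by rw [h, map_zero]; exact Submodule.zero_mem _)
          -- y^m ∈ r₁ • LQ and y^k ∈ r₂ • LQ
          have hym : ∃ l₁ ∈ LQ, algebraMap R K (y ^ m) = algebraMap R K r₁ * l₁ := by
            have hym0 : (algebraMap R K y) ^ m ≠ 0 := pow_ne_zero _ hfy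
            have hfr₁ : algebraMap R K r₁ ≠ 0 := algebraMap_ne_zero hr₁0
            have hz : algebraMap R K r₁ * ((algebraMap R K y) ^ m)⁻¹ ≠ 0 := by
              simp [hfr₁, pow_ne_zero, hfy]
            rcases valuation_tot hR hQIprime hz with h | h
            · exfalso
              apply hm
              refine mem_smul_sub.2 ⟨algebraMap R K r₁ * ((algebraMap R K y) ^ m)⁻¹, h, ?_⟩
              field_simp
              try ring
            · rw [mul_inv, inv_inv] at h
              refine ⟨(algebraMap R K r₁)⁻¹ * (algebraMap R K y) ^ m, h, ?_⟩
              rw [map_pow]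
              field_simp
          have hyk : ∃ l₂ ∈ LQ, algebraMap R K (y ^ k) = algebraMap R K r₂ * l₂ := by
            have hyk0 : (algebraMap R K y) ^ k ≠ 0 := pow_ne_zero _ hfy
            have hfr₂ : algebraMap R K r₂ ≠ 0 := algebraMap_ne_zero hr₂0
            have hz : algebraMap R K r₂ * ((algebraMap R K y) ^ k)⁻¹ ≠ 0 := by
              simp [hfr₂, pow_ne_zero, hfy]
            rcases valuation_tot hR hQIprime hz with h | h
            · exfalso
              apply hk
              refine mem_smul_sub.2 ⟨algebraMap R K r₂ * ((algebraMap R K y) ^ k)⁻¹, h, ?_⟩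
              field_simp
              try ring
            · rw [mul_inv, inv_inv] at h
              refine ⟨(algebraMap R K r₂)⁻¹ * (algebraMap R K y) ^ k, h, ?_⟩
              rw [map_pow]
              field_simp
          obtain ⟨l₁, hl₁, he₁⟩ := hym
          obtain ⟨l₂, hl₂, he₂⟩ := hyk
          have h3 := h12 (m + k + 1)
          obtain ⟨l₃, hl₃, he₃⟩ := mem_smul_sub.1 h3
          -- y^(m+k) = y^(m+k+1) * (l₃ * l₁ * l₂)
          have hyn0 : (algebraMap R K y) ^ (m + k) ≠ 0 := pow_ne_zero _ hfy
          have hcalc : (algebraMap R K y) ^ (m + k) =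
              (algebraMap R K y) ^ (m + k + 1) * (l₃ * l₁ * l₂) := by
            calc (algebraMap R K y) ^ (m + k)
                = algebraMap R K (y ^ m) * algebraMap R K (y ^ k) := by
                  rw [← map_mul, ← pow_add, map_pow]
              _ = (algebraMap R K r₁ * algebraMap R K r₂) * (l₁ * l₂) := by
                  rw [he₁, he₂]; ring
              _ = (algebraMap R K (r₁ * r₂)) * (l₁ * l₂) := by rw [map_mul]
              _ = ((algebraMap R K y) ^ (m + k + 1) * l₃) * (l₁ * l₂) := by rw [← he₃]
              _ = (algebraMap R K y) ^ (m + k + 1) * (l₃ * l₁ * l₂) := by ring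
          have h9 : algebraMap R K y * (l₃ * l₁ * l₂) = 1 := by
            apply mul_left_cancel₀ hyn0
            rw [mul_one]
            calc (algebraMap R K y) ^ (m + k) * (algebraMap R K y * (l₃ * l₁ * l₂))
                = (algebraMap R K y) ^ (m + k + 1) * (l₃ * l₁ * l₂) := by
                  rw [pow_succ]; ring
              _ = (algebraMap R K y) ^ (m + k) := hcalc.symm
          apply hinvy
          rw [inv_eq_of_mul_eq_one_right h9]
          exact locSub_mul_mem (locSub_mul_mem hl₃ hl₁) hl₂
      have hL₁p : L₁ ≤ p := by
        intro r hr n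
        refine hXY n ?_
        rw [show algebraMap R K r = algebraMap R K r * 1 from (mul_one _).symm]
        exact Submodule.mul_mem_mul (mem_idealToK.2 ⟨r, hr, rfl⟩) (one_mem_locSub hQIprime)
      by_cases hpF : Ff f p
      swap
      · exact H1 p hpprime hpF (le_trans (le_trans hIIb hIbL₁) hL₁p)
      -- p ∈ F : compare A' with the powers of y
      set Z := idealToK K A' * LQ with hZ
      have hZst : Z * LQ ≤ Z := mul_locSub_stable hQIprime A'
      by_cases hex : ∃ n : ℕ, ((algebraMap R K y) ^ n • LQ) ≤ Z
      · obtain ⟨n, hn⟩ := hex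
        apply hA'F
        refine F_mono hf ?_ hpF
        intro r hr
        have : algebraMap R K r ∈ Z := hn (hr n)
        rw [hZ] at this
        have := (algebraMap_mem_mul_locSub hQIprime).1 this
        rwa [hA'sat] at this
      · push_neg at hex
        have hZY : ∀ n : ℕ, Z ≤ (algebraMap R K y) ^ n • LQ := by
          intro n
          intro z hzZ
          by_contra hzY
          have hz0 : z ≠ 0 := fun h => hzY (h ▸ Submodule.zero_mem _)
          rcases cmp hR hQIprime (smul_locSub_stable hQIprime ((algebraMap R K y) ^ n))
            hz0 with h | h
          · exact hex n (le_trans h (smul_locSub_le hQIprime hZst hzZ))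
          · exact hzY h
        have hyinp : y ∈ p := by
          intro n
          refine hZY n ?_
          rw [show algebraMap R K y = algebraMap R K y * 1 from (mul_one _).symm]
          exact Submodule.mul_mem_mul (mem_idealToK.2 ⟨y, hyA', rfl⟩) (one_mem_locSub hQIprime)
        have h2 := hyinp 2
        obtain ⟨l, hl, hle⟩ := mem_smul_sub.1 h2
        have h9 : algebraMap R K y * l = 1 := by
          apply mul_left_cancel₀ hfy
          rw [mul_one, show algebraMap R K y * (algebraMap R K y * l) =
            (algebraMap R K y) ^ 2 * l from by ring, hle]
        apply hinvy
        rw [inv_eq_of_mul_eq_one_right h9]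
        exact hl
  -- primary
  have hprimary : L.IsPrimary := by
    rw [Ideal.isPrimary_iff]
    refine ⟨hLtop, ?_⟩
    intro a b hab
    by_cases hbQ : b ∈ QI
    · right
      rw [hrad]
      exact hbQ
    · left
      exact hLsat b a hbQ (by rwa [mul_comm])
  have hPs : QI ∈ PsSpec K f := by
    refine ⟨hQIprime, F_inf_one_eq_one hf hQF, L, hprimary, hrad, ?_⟩
    have hstep : f (idealToK K L) ⊓ 1 ≤ idealToK K L := by
      rintro w ⟨hw1, hw2⟩
      rw [hLK]
      refine ⟨?_, hw2⟩
      have hle : f (idealToK K L) ≤ f (idealToK K L₁) := by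
        have h1 : idealToK K L ≤ f (idealToK K L₁) := fun u hu => (hLK ▸ hu).1
        have h2 := hf.2.2.1 _ _ h1
        rwa [hf.2.1] at h2
      exact hle hw1
    exact le_antisymm hstep (le_inf (hf.1 _) idealToK_le_one)
  -- boundedness contradiction via H2
  apply hL₁F
  refine F_mono hf ?_ hQF
  intro y hyQI
  by_cases hy0 : y = 0
  · exact hy0 ▸ L₁.zero_mem
  have hfy : algebraMap R K y ≠ 0 := algebraMap_ne_zero hy0
  set x : K := (algebraMap R K y)⁻¹ with hx
  have hxL : x ∉ locSub K QI hQIprime := inv_not_mem_locSub hQIprime hyQI hy0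
  have hnb : ¬ ∀ w ∈ idealToK K I * locSub K QI hQIprime,
      x * w ∈ locSub K QI hQIprime := by
    intro hw
    exact hxL (H2 QI hQIprime hPs x hw)
  push_neg at hnb
  obtain ⟨w, hwmem, hwx⟩ := hnb
  have hw0 : w ≠ 0 := by
    intro h
    apply hwx
    rw [h, mul_zero]
    exact Submodule.zero_mem _
  have hxw0 : x * w ≠ 0 := by
    simp [hx, inv_ne_zero hfy, hw0]
  have hxwinv : (x * w)⁻¹ ∈ locSub K QI hQIprime :=
    (valuation_tot hR hQIprime hxw0).resolve_left hwx
  have hymem : algebraMap R K y ∈ idealToK K I * locSub K QI hQIprime := by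
    have : algebraMap R K y = w * (x * w)⁻¹ := by
      rw [hx]
      field_simp
    rw [this]
    exact mul_locSub_stable hQIprime I (Submodule.mul_mem_mul hwmem hxwinv)
  have := (algebraMap_mem_mul_locSub hQIprime).1 hymem
  exact this

end Machine
end SemistarAux
end Aux

/-- Let `R` be a Prüfer domain, `⋆` a stable semistar operation with normalized stable version
`⋆̃`, and `I` a proper ideal with finitely many minimal primes. Then `1 ∈ I^⋆ ↔ 1 ∈ I^⋆̃`. -/
theorem one_mem_star_iff_one_mem_normStable {R K : Type*} [CommRing R] [IsDomain R] [Field K] [Algebra R K]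
    [IsFractionRing R K]
    (hR : IsPruferDomain (R := R) K)
    (f : Submodule R K → Submodule R K) (hf : IsSemistarOperation K f)
    (hstable : IsStableOperation K f)
    (I : Ideal R) (hI : I ≠ ⊤) (hmin : I.minimalPrimes.Finite) :
    (1 : K) ∈ f (idealToK K I) ↔ (1 : K) ∈ normStable K f (idealToK K I) := by
  classical
  open SemistarAux in
  constructor
  · intro h
    rw [normStable, Submodule.mem_inf]
    constructor
    · rw [Submodule.mem_iInf]
      rintro ⟨P, hP, hquasi⟩
      have hIP : ¬ I ≤ P := by
        intro hle
        have h1 : (1 : K) ∈ f (idealToK K P) ⊓ 1 :=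
          ⟨hf.2.2.1 _ _ (idealToK_mono hle) h, one_mem_one⟩
        rw [hquasi] at h1
        have := algebraMap_mem_idealToK.1 (by rwa [map_one] : algebraMap R K 1 ∈ idealToK K P)
        exact hP.ne_top ((Ideal.eq_top_iff_one P).2 this)
      obtain ⟨s, hsI, hsP⟩ := SetLike.not_le_iff_exists.1 hIP
      exact (one_mem_mul_locSub hP).2 ⟨s, hsP, by simpa using hsI⟩
    · rw [Submodule.mem_iInf]
      rintro ⟨p, hp, hFp, L₀, hprim, hrad, hq⟩
      exact forward_vOp hf hR hp hprim hrad hq h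
  · intro h
    by_contra hIF
    rw [normStable, Submodule.mem_inf, Submodule.mem_iInf, Submodule.mem_iInf] at h
    obtain ⟨hH1, hH2⟩ := h
    have H1 : ∀ p : Ideal R, p.IsPrime → ¬ Ff f p → ¬ I ≤ p := by
      intro p hp hnF hle
      have hmem : p ∈ QSpec K f := ⟨hp, quasi_of_not_F hf hstable hp hnF⟩
      have h1 := hH1 ⟨p, hmem⟩
      obtain ⟨s, hs, hs1⟩ := (one_mem_mul_locSub hp).1 h1
      rw [mul_one] at hs1
      exact hs (hle hs1)
    have H2 : ∀ (Q : Ideal R) (hQ : Q.IsPrime), Q ∈ PsSpec K f → ∀ x : K,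
        (∀ w ∈ idealToK K I * locSub K Q hQ, x * w ∈ locSub K Q hQ) → x ∈ locSub K Q hQ := by
      intro Q hQ hmem x hx
      have h2 := hH2 ⟨Q, hmem⟩
      rw [vOp, one_mem_div_iff] at h2
      exact h2 (Submodule.mem_div_iff_forall_mul_mem.2 hx)
    have hsand : ¬ (∀ P (hP : P ∈ I.minimalPrimes), Ff f P ∧ Ff f (satId P hP.1.1 I)) :=
      fun hall => hIF (sandwich hf hR hI hmin hall)
    push_neg at hsand
    obtain ⟨P, hPmin, hbad⟩ := hsand
    by_cases hFP : Ff f P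
    · exact machine hf hstable hR hPmin.1.1 (hbad hFP) H1 H2
    · exact H1 P hPmin.1.1 hFP hPmin.1.2
end
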